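/- arXiv:2007.14105 — 7 statements merged into one kernel-verified Lean document; each statement's English description precedes it below -/
import Mathlib

section
/- Let n, r ≥ 1 and let D^n ⊂ ℂ^n denote the open unit polydisc. Let L : D^n × D^n → GL(r,ℂ) be a map whose entries are holomorphic in both variables jointly, let G, H : D^n → D^n be holomorphic maps, and let J, J' : D^n → GL(r,ℂ) be holomorphic maps such that L(z,w) = J(z) · L(G(z), H(w)) · J'(w) for all z, w ∈ D^n. For 1 ≤ i, j ≤ n define 𝒦^{ij}(z,w) := ∂_{z_i}( L(z,w)^{-1} · ∂_{w_j} L(z,w) ) ∈ M_r(ℂ), and let 𝒦(z,w) ∈ M_{nr}(ℂ) be the n×n block matrix whose (i,j) block is 𝒦^{ij}(z,w). Then for all z, w ∈ D^n, 𝒦(z,w) = ( DG(z)^T ⊗ J'(w)^{-1} ) · 𝒦(G(z), H(w)) · ( DH(w) ⊗ J'(w) ), where DG(z) = (∂_{z_j} G_i(z))_{i,j} and DH(w) = (∂_{w_j} H_i(w))_{i,j} are the complex Jacobian matrices and ⊗ denotes the Kronecker product of matrices. -/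
/-!
Write `Θⱼ(z, w) = L(z, w)⁻¹ ∂_{w_j} L(z, w)`. Differentiating the transformation law in `w`, where
`J(z)` is a constant, gives
`Θⱼ(z, w) = J'(w)⁻¹ (∑ₗ ∂_{w_j} Hₗ(w) Θₗ(G z, H w)) J'(w) + J'(w)⁻¹ ∂_{w_j} J'(w)`,
whose last term does not depend on `z`. Differentiating in `z_i`, with the chain rule through `G`,
gives `𝒦^{ij}(z, w) = J'(w)⁻¹ (∑ₗ ∑ₖ ∂_{w_j} Hₗ ∂_{z_i} G_k 𝒦^{kl}(G z, H w)) J'(w)`, which is the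
block form of the Kronecker identity. The only analytic input is that `∂_{w_j} L` is again
holomorphic in `z`: by Cauchy's formula it is a circle integral of `L`, which may be differentiated
under the integral sign because the Cauchy estimates bound `DL` locally uniformly.
-/

open Matrix
open scoped Kronecker

/-- The open unit polydisc in `ℂⁿ`. -/
def polydisc (n : ℕ) : Set (Fin n → ℂ) := {z | ∀ i, ‖z i‖ < 1}

/-- Entrywise complex partial derivative of a matrix-valued function of two vector variables,
in the `i`-th coordinate of the first variable. -/
noncomputable def pd1 {n r : ℕ}
    (F : (Fin n → ℂ) → (Fin n → ℂ) → Matrix (Fin r) (Fin r) ℂ) (i : Fin n) :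
    (Fin n → ℂ) → (Fin n → ℂ) → Matrix (Fin r) (Fin r) ℂ :=
  fun z w => Matrix.of fun a b => fderiv ℂ (fun z' => F z' w a b) z (Pi.single i 1)

/-- Entrywise complex partial derivative in the `j`-th coordinate of the second variable. -/
noncomputable def pd2 {n r : ℕ}
    (F : (Fin n → ℂ) → (Fin n → ℂ) → Matrix (Fin r) (Fin r) ℂ) (j : Fin n) :
    (Fin n → ℂ) → (Fin n → ℂ) → Matrix (Fin r) (Fin r) ℂ :=
  fun z w => Matrix.of fun a b => fderiv ℂ (fun w' => F z w' a b) w (Pi.single j 1)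

/-- The complex Jacobian matrix `(∂_{z_j} G_i(z))_{i,j}` of a holomorphic map `G : ℂⁿ → ℂⁿ`. -/
noncomputable def jacobianMat {n : ℕ} (G : (Fin n → ℂ) → (Fin n → ℂ)) (z : Fin n → ℂ) :
    Matrix (Fin n) (Fin n) ℂ :=
  Matrix.of fun i j => fderiv ℂ (fun z' => G z' i) z (Pi.single j 1)

/-- The `nr × nr` block curvature matrix `𝒦(z,w)` whose `(i,j)` block is
`𝒦^{ij}(z,w) = ∂_{z_i}( L(z,w)⁻¹ · ∂_{w_j} L(z,w) )`. -/
noncomputable def curvMat {n r : ℕ}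
    (L : (Fin n → ℂ) → (Fin n → ℂ) → Matrix (Fin r) (Fin r) ℂ)
    (z w : Fin n → ℂ) : Matrix (Fin n × Fin r) (Fin n × Fin r) ℂ :=
  Matrix.of fun p q =>
    pd1 (fun z' w' => (L z' w')⁻¹ * pd2 L q.1 z' w') p.1 z w p.2 q.2

open Metric Set Filter Topology Real MeasureTheory

section Holomorphic

variable {E F : Type*} [NormedAddCommGroup E] [NormedSpace ℂ E]
  [NormedAddCommGroup F] [NormedSpace ℂ F] {f : E → F}

theorem norm_fderiv_le_of_forall_dist_le {c y : E} {R M : ℝ} (hf : DifferentiableOn ℂ f (ball c R))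
    (hM : ∀ z ∈ ball c R, dist (f z) (f c) ≤ M) (hy : y ∈ ball c (R / 2)) :
    ‖fderiv ℂ f y‖ ≤ 4 * M / R := by
  have hR : 0 < R := by linarith [nonempty_ball.mp ⟨y, hy⟩]
  have hsub : ball y (R / 2) ⊆ ball c R := fun z hz => by
    rw [mem_ball] at *
    linarith [dist_triangle z y c]
  refine (Complex.norm_fderiv_le_div_of_mapsTo_ball (R₂ := 2 * M) (hf.mono hsub) (fun z hz => ?_)
    (half_pos hR)).trans_eq (by ring)
  rw [mem_closedBall]
  linarith [dist_triangle_right (f z) (f y) (f c), hM z (hsub hz),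
    hM y (ball_subset_ball (half_le_self hR.le) hy)]

theorem add_smul_mem_ball {x₀ x v : E} {t : ℂ} {δ ρ : ℝ} (hx : x ∈ ball x₀ (δ / 4)) (ht : ‖t‖ ≤ ρ)
    (hρv : ρ * ‖v‖ < δ / 4) : x + t • v ∈ ball x₀ (δ / 2) := by
  rw [mem_ball, dist_eq_norm, add_sub_right_comm] at *
  calc ‖x - x₀ + t • v‖ ≤ ‖x - x₀‖ + ‖t‖ * ‖v‖ := (norm_add_le _ _).trans_eq (by rw [norm_smul])
    _ < δ / 4 + δ / 4 :=
      add_lt_add_of_lt_of_le hx ((mul_le_mul_of_nonneg_right ht (norm_nonneg v)).trans hρv.le)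
    _ = δ / 2 := by ring

variable [CompleteSpace F]

theorem fderiv_apply_eq_circleIntegral {x v : E} {ρ : ℝ} (hρ : 0 < ρ)
    (hf : ∀ t ∈ closedBall (0 : ℂ) ρ, DifferentiableAt ℂ f (x + t • v)) :
    fderiv ℂ f x v = (2 * π * Complex.I)⁻¹ • ∮ t in C(0, ρ), (1 / t ^ 2) • f (x + t • v) := by
  have hline : ∀ t : ℂ, HasDerivAt (fun t : ℂ => x + t • v) v t := fun t => by
    simpa using ((hasDerivAt_id t).smul_const v).const_add x
  have hderiv : HasDerivAt (fun t : ℂ => f (x + t • v)) (fderiv ℂ f x v) 0 := by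
    have hx : DifferentiableAt ℂ f x := by simpa using hf 0 (mem_closedBall_self hρ.le)
    exact hx.hasFDerivAt.comp_hasDerivAt_of_eq 0 (hline 0) (by simp)
  have hdiff : DifferentiableOn ℂ (fun t : ℂ => f (x + t • v)) (closedBall 0 ρ) := fun t ht =>
    ((hf t ht).comp t (hline t).differentiableAt).differentiableWithinAt
  have hcauchy := hdiff.deriv_eq_smul_circleIntegral hρ
  simp only [sub_zero] at hcauchy
  rw [hcauchy, hderiv.deriv, smul_smul, inv_mul_cancel₀ Complex.two_pi_I_ne_zero, one_smul]

theorem differentiableAt_circleIntegral_comp_add_smul [FiniteDimensional ℂ E]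
    [SecondCountableTopology F] {x₀ v : E} {δ ρ M : ℝ} (hf : DifferentiableOn ℂ f (ball x₀ δ))
    (hM : ∀ y ∈ ball x₀ δ, dist (f y) (f x₀) ≤ M) (hρ : 0 < ρ) (hρv : ρ * ‖v‖ < δ / 4) :
    DifferentiableAt ℂ (fun x => ∮ t in C(0, ρ), (1 / t ^ 2) • f (x + t • v)) x₀ := by
  have hδ : 0 < δ / 4 := lt_of_le_of_lt (by positivity) hρv
  have hcircle : ∀ x ∈ ball x₀ (δ / 4), ∀ θ, x + circleMap 0 ρ θ • v ∈ ball x₀ (δ / 2) :=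
    fun x hx θ => add_smul_mem_ball hx (by rw [norm_circleMap_zero, abs_of_pos hρ]) hρv
  have hdiffAt : ∀ y ∈ ball x₀ (δ / 2), DifferentiableAt ℂ f y := fun y hy =>
    hf.differentiableAt (isOpen_ball.mem_nhds (ball_subset_ball (by linarith) hy))
  set k : ℝ → ℂ := fun θ => deriv (circleMap 0 ρ) θ * (1 / circleMap 0 ρ θ ^ 2) with hk
  have hk_cont : Continuous k := by
    simp only [hk, deriv_circleMap]
    exact (by fun_prop : Continuous fun θ => circleMap 0 ρ θ * Complex.I).mul
      (continuous_const.div (by fun_prop) fun θ => pow_ne_zero _ (circleMap_ne_center hρ.ne'))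
  have hk_norm : ∀ θ, ‖k θ‖ = ρ⁻¹ := fun θ => by
    simp [hk, deriv_circleMap, norm_circleMap_zero, abs_of_pos hρ]
    field_simp
  have hcont : ∀ x ∈ ball x₀ (δ / 4), Continuous fun θ => k θ • f (x + circleMap 0 ρ θ • v) :=
    fun x hx => hk_cont.smul (continuous_iff_continuousAt.2 fun θ =>
      (hdiffAt _ (hcircle x hx θ)).continuousAt.comp
        (f := fun θ => x + circleMap 0 ρ θ • v) (by fun_prop))
  borelize E
  have hint := intervalIntegral.hasFDerivAt_integral_of_dominated_of_fderiv_le (μ := volume)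
    (a := 0) (b := 2 * π) (F := fun x θ => k θ • f (x + circleMap 0 ρ θ • v))
    (F' := fun x θ => k θ • fderiv ℂ f (x + circleMap 0 ρ θ • v))
    (bound := fun _ => ρ⁻¹ * (4 * M / δ)) (ball_mem_nhds x₀ hδ)
    (eventually_of_mem (ball_mem_nhds x₀ hδ) fun x hx => (hcont x hx).aestronglyMeasurable)
    ((hcont x₀ (mem_ball_self hδ)).intervalIntegrable _ _)
    (hk_cont.aestronglyMeasurable.smul
      ((measurable_fderiv ℂ f).comp (by fun_prop)).aestronglyMeasurable)
    (ae_of_all _ fun θ _ x hx => by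
      rw [norm_smul, hk_norm]
      exact mul_le_mul_of_nonneg_left
        (norm_fderiv_le_of_forall_dist_le hf hM (hcircle x hx θ)) (by positivity))
    intervalIntegrable_const
    (ae_of_all _ fun θ _ x hx =>
      ((hdiffAt _ (hcircle x hx θ)).hasFDerivAt.comp x
        ((hasFDerivAt_id x).add_const _)).const_smul (k θ))
  refine hint.differentiableAt.congr_of_eventuallyEq (Eventually.of_forall fun x => ?_)
  simp only [circleIntegral, hk, smul_smul]

theorem differentiableOn_fderiv_apply [FiniteDimensional ℂ E] [SecondCountableTopology F]
    {s : Set E} (hf : DifferentiableOn ℂ f s) (hs : IsOpen s) (v : E) :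
    DifferentiableOn ℂ (fun x => fderiv ℂ f x v) s := by
  intro x₀ hx₀
  obtain ⟨δ, hδ, hball⟩ := Metric.eventually_nhds_iff_ball.mp
    (Filter.Eventually.and (p := (· ∈ s)) (hs.mem_nhds hx₀)
      (((hf x₀ hx₀).differentiableAt (hs.mem_nhds hx₀)).continuousAt.eventually
        (ball_mem_nhds _ one_pos)))
  have hfδ : DifferentiableOn ℂ f (ball x₀ δ) := hf.mono fun y hy => (hball y hy).1
  set ρ := δ / (4 * (‖v‖ + 1)) with hρ_def
  have hρ : 0 < ρ := by positivity
  have hρv : ρ * ‖v‖ < δ / 4 := by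
    rw [hρ_def, div_mul_eq_mul_div, div_lt_div_iff₀ (by positivity) (by norm_num)]
    nlinarith [norm_nonneg v]
  have hrepr : (fun x => fderiv ℂ f x v) =ᶠ[𝓝 x₀]
      fun x => (2 * π * Complex.I)⁻¹ • ∮ t in C(0, ρ), (1 / t ^ 2) • f (x + t • v) := by
    filter_upwards [ball_mem_nhds x₀ (by positivity : 0 < δ / 4)] with x hx
    exact fderiv_apply_eq_circleIntegral hρ fun t ht => hfδ.differentiableAt
      (isOpen_ball.mem_nhds (ball_subset_ball (by linarith)
        (add_smul_mem_ball hx (mem_closedBall_zero_iff.mp ht) hρv)))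
  exact (((differentiableAt_circleIntegral_comp_add_smul hfδ (fun y hy => (hball y hy).2.le) hρ
    hρv).const_smul _).congr_of_eventuallyEq hrepr).differentiableWithinAt

theorem differentiableAt_fderiv_slice_apply {E₁ E₂ : Type*} [NormedAddCommGroup E₁]
    [NormedSpace ℂ E₁] [FiniteDimensional ℂ E₁] [NormedAddCommGroup E₂] [NormedSpace ℂ E₂]
    [FiniteDimensional ℂ E₂] [SecondCountableTopology F] {f : E₁ × E₂ → F} {s : Set (E₁ × E₂)}
    (hf : DifferentiableOn ℂ f s) (hs : IsOpen s) {x : E₁} {y : E₂} (hxy : (x, y) ∈ s) (v : E₂) :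
    DifferentiableAt ℂ (fun x' => fderiv ℂ (fun y' => f (x', y')) y v) x := by
  have hslice : (fun x' => fderiv ℂ (fun y' => f (x', y')) y v) =ᶠ[𝓝 x]
      fun x' => fderiv ℂ f (x', y) (0, v) := by
    filter_upwards [(hs.preimage (Continuous.prodMk_left y)).mem_nhds hxy] with x' hx'
    exact congrArg (· v) ((hf.differentiableAt (hs.mem_nhds hx')).hasFDerivAt.comp y
      (hasFDerivAt_prodMk_right x' y)).fderiv
  have hd : DifferentiableAt ℂ (fun p => fderiv ℂ f p (0, v)) (x, y) :=
    (differentiableOn_fderiv_apply hf hs (0, v)).differentiableAt (hs.mem_nhds hxy)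
  exact (hd.comp x (hasFDerivAt_prodMk_left (𝕜 := ℂ) x y).differentiableAt :).congr_of_eventuallyEq
    hslice

end Holomorphic

section MatrixCalculus

variable {E : Type*} [NormedAddCommGroup E] [NormedSpace ℂ E] {l m n : Type*}

/-- Matrices carry no global normed structure, so calculus of matrix-valued maps is entrywise. -/
def MatrixDifferentiableAt (F : E → Matrix m n ℂ) (x : E) : Prop :=
  ∀ a b, DifferentiableAt ℂ (fun y => F y a b) x

noncomputable def matrixFDeriv (F : E → Matrix m n ℂ) (x v : E) : Matrix m n ℂ :=
  of fun a b => fderiv ℂ (fun y => F y a b) x v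

variable {F K : E → Matrix m n ℂ} {x v : E}

theorem matrixDifferentiableAt_const (C : Matrix m n ℂ) :
    MatrixDifferentiableAt (fun _ : E => C) x :=
  fun _ _ => differentiableAt_const _

theorem MatrixDifferentiableAt.mul [Fintype m] {F : E → Matrix l m ℂ} {K : E → Matrix m n ℂ}
    (hF : MatrixDifferentiableAt F x) (hK : MatrixDifferentiableAt K x) :
    MatrixDifferentiableAt (fun y => F y * K y) x := fun a b => by
  simp only [mul_apply]
  exact DifferentiableAt.fun_sum fun c _ => (hF a c).mul (hK c b)

theorem MatrixDifferentiableAt.sum_smul {ι : Type*} [Fintype ι] (c : ι → ℂ)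
    {Φ : ι → E → Matrix m n ℂ} (hΦ : ∀ k, MatrixDifferentiableAt (Φ k) x) :
    MatrixDifferentiableAt (fun y => ∑ k, c k • Φ k y) x := fun a b => by
  simp only [Matrix.sum_apply, Matrix.smul_apply, smul_eq_mul]
  exact DifferentiableAt.fun_sum fun k _ => (hΦ k a b).const_mul _

theorem MatrixDifferentiableAt.comp {E' : Type*} [NormedAddCommGroup E'] [NormedSpace ℂ E']
    {F : E' → Matrix m n ℂ} {G : E → E'} (hF : MatrixDifferentiableAt F (G x))
    (hG : DifferentiableAt ℂ G x) : MatrixDifferentiableAt (fun y => F (G y)) x :=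
  fun a b => (hF a b).comp x hG

theorem MatrixDifferentiableAt.det [Fintype m] [DecidableEq m] {F : E → Matrix m m ℂ}
    (hF : MatrixDifferentiableAt F x) : DifferentiableAt ℂ (fun y => (F y).det) x := by
  simp only [det_apply]
  exact DifferentiableAt.fun_sum fun σ _ =>
    (HasFDerivAt.finsetProd fun i _ => (hF (σ i) i).hasFDerivAt).differentiableAt.const_smul _

theorem MatrixDifferentiableAt.inv [Fintype m] [DecidableEq m] {F : E → Matrix m m ℂ}
    (hF : MatrixDifferentiableAt F x) (hx : IsUnit (F x)) :
    MatrixDifferentiableAt (fun y => (F y)⁻¹) x := fun a b => by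
  have hdet : (F x).det ≠ 0 := ((isUnit_iff_isUnit_det _).mp hx).ne_zero
  simp only [inv_def, Ring.inverse_eq_inv', Matrix.smul_apply, adjugate_apply, smul_eq_mul]
  refine (hF.det.inv hdet).mul (MatrixDifferentiableAt.det fun c d => ?_)
  by_cases hc : c = b
  · simp only [hc, updateRow_self]
    exact differentiableAt_const _
  · simp only [updateRow_ne hc]
    exact hF c d

theorem Filter.EventuallyEq.matrixFDeriv_eq (h : F =ᶠ[𝓝 x] K) :
    matrixFDeriv F x v = matrixFDeriv K x v := by
  ext a b
  have hab : (fun y => F y a b) =ᶠ[𝓝 x] fun y => K y a b := h.mono fun y hy => congrArg (· a b) hy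
  simp only [matrixFDeriv, of_apply, hab.fderiv_eq]

theorem matrixFDeriv_const (C : Matrix m n ℂ) : matrixFDeriv (fun _ : E => C) x v = 0 := by
  ext a b
  simp [matrixFDeriv]

theorem matrixFDeriv_add_const (C : Matrix m n ℂ) :
    matrixFDeriv (fun y => F y + C) x v = matrixFDeriv F x v := by
  ext a b
  simp only [matrixFDeriv, of_apply, Matrix.add_apply, fderiv_add_const]

theorem matrixFDeriv_mul [Fintype m] {F : E → Matrix l m ℂ} {K : E → Matrix m n ℂ}
    (hF : MatrixDifferentiableAt F x) (hK : MatrixDifferentiableAt K x) :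
    matrixFDeriv (fun y => F y * K y) x v =
      matrixFDeriv F x v * K x + F x * matrixFDeriv K x v := by
  ext a b
  have := HasFDerivAt.fun_sum (u := Finset.univ) (A := fun c y => F y a c * K y c b)
    fun c _ => (hF a c).hasFDerivAt.mul (hK c b).hasFDerivAt
  simp only [matrixFDeriv, Matrix.add_apply, Matrix.mul_apply, of_apply]
  rw [this.fderiv]
  simp only [_root_.sum_apply, _root_.add_apply, _root_.smul_apply, smul_eq_mul,
    ← Finset.sum_add_distrib]
  exact Finset.sum_congr rfl fun c _ => by ring

theorem matrixFDeriv_sum_smul {ι : Type*} [Fintype ι] (c : ι → ℂ)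
    {Φ : ι → E → Matrix m n ℂ} (hΦ : ∀ k, MatrixDifferentiableAt (Φ k) x) :
    matrixFDeriv (fun y => ∑ k, c k • Φ k y) x v = ∑ k, c k • matrixFDeriv (Φ k) x v := by
  ext a b
  simp only [matrixFDeriv, of_apply, Matrix.sum_apply, Matrix.smul_apply, smul_eq_mul]
  rw [fderiv_fun_sum fun k _ => (hΦ k a b).const_mul (c k), _root_.sum_apply]
  exact Finset.sum_congr rfl fun k _ => by rw [fderiv_const_mul (hΦ k a b), _root_.smul_apply,
    smul_eq_mul]

theorem matrixFDeriv_comp {ι : Type*} [Fintype ι] [DecidableEq ι] {F : (ι → ℂ) → Matrix m n ℂ}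
    {G : E → ι → ℂ} (hF : MatrixDifferentiableAt F (G x)) (hG : DifferentiableAt ℂ G x) :
    matrixFDeriv (fun y => F (G y)) x v =
      ∑ k, fderiv ℂ (fun y => G y k) x v • matrixFDeriv F (G x) (Pi.single k 1) := by
  ext a b
  simp only [matrixFDeriv, of_apply, Matrix.sum_apply, Matrix.smul_apply, smul_eq_mul]
  rw [fderiv_fun_comp x (hF a b) hG, ContinuousLinearMap.comp_apply,
    pi_eq_sum_univ' (fderiv ℂ G x v), map_sum]
  exact Finset.sum_congr rfl fun k _ => by rw [map_smul, smul_eq_mul, fderiv_apply hG]; rfl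

theorem matrixFDeriv_const_mul [Fintype m] (C : Matrix l m ℂ) (hF : MatrixDifferentiableAt F x) :
    matrixFDeriv (fun y => C * F y) x v = C * matrixFDeriv F x v := by
  rw [matrixFDeriv_mul (matrixDifferentiableAt_const C) hF, matrixFDeriv_const, Matrix.zero_mul,
    zero_add]

theorem matrixFDeriv_mul_const [Fintype n] (C : Matrix n l ℂ) (hF : MatrixDifferentiableAt F x) :
    matrixFDeriv (fun y => F y * C) x v = matrixFDeriv F x v * C := by
  rw [matrixFDeriv_mul hF (matrixDifferentiableAt_const C), matrixFDeriv_const, Matrix.mul_zero,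
    add_zero]

end MatrixCalculus

section Transformation

variable {E : Type*} [NormedAddCommGroup E] [NormedSpace ℂ E] {m ι : Type*}
  [Fintype m] [Fintype ι] [DecidableEq ι] {x v : E}

theorem inv_mul_matrixFDeriv_of_eventuallyEq_mul_comp_mul [DecidableEq m]
    {L B : E → Matrix m m ℂ} {A : Matrix m m ℂ} {P : (ι → ℂ) → Matrix m m ℂ} {H : E → ι → ℂ}
    (hL : L =ᶠ[𝓝 x] fun y => A * P (H y) * B y) (hA : IsUnit A) (hPx : IsUnit (P (H x)))
    (hP : MatrixDifferentiableAt P (H x)) (hH : DifferentiableAt ℂ H x)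
    (hB : MatrixDifferentiableAt B x) :
    (L x)⁻¹ * matrixFDeriv L x v =
      (B x)⁻¹ * (∑ k, fderiv ℂ (fun y => H y k) x v •
        ((P (H x))⁻¹ * matrixFDeriv P (H x) (Pi.single k 1))) * B x +
      (B x)⁻¹ * matrixFDeriv B x v := by
  have hPH : MatrixDifferentiableAt (fun y => P (H y)) x := hP.comp hH
  simp_rw [← Matrix.mul_smul, ← Finset.mul_sum]
  rw [hL.matrixFDeriv_eq, hL.eq_of_nhds,
    matrixFDeriv_mul ((matrixDifferentiableAt_const A).mul hPH) hB,
    matrixFDeriv_const_mul A hPH, matrixFDeriv_comp hP hH, Matrix.mul_inv_rev, Matrix.mul_inv_rev]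
  simp only [Matrix.mul_add, Matrix.mul_assoc,
    nonsing_inv_mul_cancel_left _ _ ((isUnit_iff_isUnit_det A).mp hA),
    nonsing_inv_mul_cancel_left _ _ ((isUnit_iff_isUnit_det _).mp hPx)]

theorem matrixFDeriv_of_eventuallyEq_conj_sum_comp {ι' : Type*} [Fintype ι'] {M : E → Matrix m m ℂ}
    {Φ : ι' → (ι → ℂ) → Matrix m m ℂ} {G : E → ι → ℂ} {C D K : Matrix m m ℂ} {c : ι' → ℂ}
    (hM : M =ᶠ[𝓝 x] fun y => C * (∑ l, c l • Φ l (G y)) * D + K)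
    (hΦ : ∀ l, MatrixDifferentiableAt (Φ l) (G x)) (hG : DifferentiableAt ℂ G x) :
    matrixFDeriv M x v = C * (∑ l, c l • ∑ k, fderiv ℂ (fun y => G y k) x v •
      matrixFDeriv (Φ l) (G x) (Pi.single k 1)) * D := by
  have hΦG : ∀ l, MatrixDifferentiableAt (fun y => Φ l (G y)) x := fun l => (hΦ l).comp hG
  rw [hM.matrixFDeriv_eq, matrixFDeriv_add_const,
    matrixFDeriv_mul_const D ((matrixDifferentiableAt_const C).mul
      (MatrixDifferentiableAt.sum_smul c hΦG)),
    matrixFDeriv_const_mul C (MatrixDifferentiableAt.sum_smul c hΦG), matrixFDeriv_sum_smul c hΦG]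
  simp only [matrixFDeriv_comp (hΦ _) hG]

end Transformation

theorem kronecker_mul_mul_kronecker_apply {R ι m : Type*} [CommSemiring R] [Fintype ι] [Fintype m]
    (A B : Matrix ι ι R) (C D : Matrix m m R) (K : Matrix (ι × m) (ι × m) R) (i j : ι) (a b : m) :
    ((Aᵀ ⊗ₖ C) * K * (B ⊗ₖ D)) (i, a) (j, b) =
      (C * (∑ l, B l j • ∑ k, A k i • of fun c d => K (k, c) (l, d)) * D) a b := by
  simp only [mul_apply, kroneckerMap_apply, transpose_apply, Fintype.sum_prod_type,
    Matrix.sum_apply, Matrix.smul_apply, of_apply, smul_eq_mul, Finset.sum_mul, Finset.mul_sum]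
  rw [Finset.sum_comm]
  exact Finset.sum_congr rfl fun d _ => Finset.sum_congr rfl fun l _ => Finset.sum_comm.trans
    (Finset.sum_congr rfl fun c _ => Finset.sum_congr rfl fun k _ => by ring)

section JointlyHolomorphic

variable {E₁ E₂ : Type*} [NormedAddCommGroup E₁] [NormedSpace ℂ E₁] [NormedAddCommGroup E₂]
  [NormedSpace ℂ E₂] {m n : Type*} {s : Set (E₁ × E₂)} {x : E₁} {y : E₂}

theorem matrixDifferentiableAt_left {L : E₁ → E₂ → Matrix m n ℂ} (hs : IsOpen s)
    (hL : ∀ a b, DifferentiableOn ℂ (fun p : E₁ × E₂ => L p.1 p.2 a b) s) (hxy : (x, y) ∈ s) :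
    MatrixDifferentiableAt (fun u => L u y) x := fun a b =>
  (((hL a b).differentiableAt (hs.mem_nhds hxy)).comp x
    (hasFDerivAt_prodMk_left (𝕜 := ℂ) x y).differentiableAt :)

theorem matrixDifferentiableAt_right {L : E₁ → E₂ → Matrix m n ℂ} (hs : IsOpen s)
    (hL : ∀ a b, DifferentiableOn ℂ (fun p : E₁ × E₂ => L p.1 p.2 a b) s) (hxy : (x, y) ∈ s) :
    MatrixDifferentiableAt (L x) y := fun a b =>
  (((hL a b).differentiableAt (hs.mem_nhds hxy)).comp y
    (hasFDerivAt_prodMk_right (𝕜 := ℂ) x y).differentiableAt :)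

theorem matrixDifferentiableAt_inv_mul_matrixFDeriv_right [Fintype m] [DecidableEq m]
    [FiniteDimensional ℂ E₁] [FiniteDimensional ℂ E₂] {L : E₁ → E₂ → Matrix m m ℂ}
    (hs : IsOpen s) (hL : ∀ a b, DifferentiableOn ℂ (fun p : E₁ × E₂ => L p.1 p.2 a b) s)
    (hxy : (x, y) ∈ s) (hunit : IsUnit (L x y)) (v : E₂) :
    MatrixDifferentiableAt (fun u => (L u y)⁻¹ * matrixFDeriv (L u) y v) x :=
  ((matrixDifferentiableAt_left hs hL hxy).inv hunit).mul fun a b =>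
    differentiableAt_fderiv_slice_apply (hL a b) hs hxy v

end JointlyHolomorphic

theorem isOpen_polydisc (n : ℕ) : IsOpen (polydisc n) := by
  simp only [polydisc, ofPred_forall]
  exact isOpen_iInter_of_finite fun i => isOpen_lt (by fun_prop) continuous_const

theorem statement0_general {n r : ℕ}
    (L : (Fin n → ℂ) → (Fin n → ℂ) → Matrix (Fin r) (Fin r) ℂ)
    (G H : (Fin n → ℂ) → (Fin n → ℂ))
    (J J' : (Fin n → ℂ) → Matrix (Fin r) (Fin r) ℂ)
    (hLinv : ∀ z ∈ polydisc n, ∀ w ∈ polydisc n, IsUnit (L z w))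
    (hLhol : ∀ a b : Fin r, DifferentiableOn ℂ
      (fun p : (Fin n → ℂ) × (Fin n → ℂ) => L p.1 p.2 a b) (polydisc n ×ˢ polydisc n))
    (hG : Set.MapsTo G (polydisc n) (polydisc n))
    (hH : Set.MapsTo H (polydisc n) (polydisc n))
    (hGhol : ∀ i : Fin n, DifferentiableOn ℂ (fun z => G z i) (polydisc n))
    (hHhol : ∀ i : Fin n, DifferentiableOn ℂ (fun w => H w i) (polydisc n))
    (hJinv : ∀ z ∈ polydisc n, IsUnit (J z))
    (hJ'hol : ∀ a b : Fin r, DifferentiableOn ℂ (fun w => J' w a b) (polydisc n))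
    (htrans : ∀ z ∈ polydisc n, ∀ w ∈ polydisc n,
      L z w = J z * L (G z) (H w) * J' w) :
    ∀ z ∈ polydisc n, ∀ w ∈ polydisc n,
      curvMat L z w =
        ((jacobianMat G z)ᵀ ⊗ₖ (J' w)⁻¹) * curvMat L (G z) (H w) *
          ((jacobianMat H w) ⊗ₖ (J' w)) := by
  intro z hz w hw
  have hU := isOpen_polydisc n
  have hcoords : ∀ {F : (Fin n → ℂ) → Fin n → ℂ}, (∀ i, DifferentiableOn ℂ (fun z => F z i)
      (polydisc n)) → ∀ z ∈ polydisc n, DifferentiableAt ℂ F z := fun hF z hz =>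
    differentiableAt_pi.2 fun i => (hF i).differentiableAt (hU.mem_nhds hz)
  have hconn : ∀ j, ∀ z' ∈ polydisc n, (L z' w)⁻¹ * pd2 L j z' w =
      (J' w)⁻¹ * (∑ l, jacobianMat H w l j • ((L (G z') (H w))⁻¹ * pd2 L l (G z') (H w))) *
        J' w + (J' w)⁻¹ * matrixFDeriv J' w (Pi.single j 1) := fun j z' hz' =>
    inv_mul_matrixFDeriv_of_eventuallyEq_mul_comp_mul
      (eventually_of_mem (hU.mem_nhds hw) (htrans z' hz'))
      (hJinv z' hz') (hLinv _ (hG hz') _ (hH hw))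
      (matrixDifferentiableAt_right (hU.prod hU) hLhol ⟨hG hz', hH hw⟩) (hcoords hHhol w hw)
      fun a b => (hJ'hol a b).differentiableAt (hU.mem_nhds hw)
  ext ⟨i, a⟩ ⟨j, b⟩
  rw [kronecker_mul_mul_kronecker_apply]
  have hcurv := matrixFDeriv_of_eventuallyEq_conj_sum_comp (v := Pi.single i 1) (G := G)
    (Φ := fun l u => (L u (H w))⁻¹ * pd2 L l u (H w)) (c := fun l => jacobianMat H w l j)
    (eventually_of_mem (hU.mem_nhds hz) (hconn j))
    (fun l => matrixDifferentiableAt_inv_mul_matrixFDeriv_right (hU.prod hU) hLhol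
      ⟨hG hz, hH hw⟩ (hLinv _ (hG hz) _ (hH hw)) _)
    (hcoords hGhol z hz)
  exact congrFun (congrFun hcurv a) b

/-- Transformation rule for the curvature of a quasi-invariant kernel
(sesquiholomorphic form): if `L(z,w) = J(z) · L(G(z), H(w)) · J'(w)` on the polydisc, then
`𝒦(z,w) = (DG(z)ᵀ ⊗ J'(w)⁻¹) · 𝒦(G(z), H(w)) · (DH(w) ⊗ J'(w))`. -/
theorem statement0 {n r : ℕ} (hn : 1 ≤ n) (hr : 1 ≤ r)
    (L : (Fin n → ℂ) → (Fin n → ℂ) → Matrix (Fin r) (Fin r) ℂ)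
    (G H : (Fin n → ℂ) → (Fin n → ℂ))
    (J J' : (Fin n → ℂ) → Matrix (Fin r) (Fin r) ℂ)
    (hLinv : ∀ z ∈ polydisc n, ∀ w ∈ polydisc n, IsUnit (L z w))
    (hLhol : ∀ a b : Fin r, DifferentiableOn ℂ
      (fun p : (Fin n → ℂ) × (Fin n → ℂ) => L p.1 p.2 a b) (polydisc n ×ˢ polydisc n))
    (hG : Set.MapsTo G (polydisc n) (polydisc n))
    (hH : Set.MapsTo H (polydisc n) (polydisc n))
    (hGhol : ∀ i : Fin n, DifferentiableOn ℂ (fun z => G z i) (polydisc n))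
    (hHhol : ∀ i : Fin n, DifferentiableOn ℂ (fun w => H w i) (polydisc n))
    (hJinv : ∀ z ∈ polydisc n, IsUnit (J z))
    (hJ'inv : ∀ w ∈ polydisc n, IsUnit (J' w))
    (hJhol : ∀ a b : Fin r, DifferentiableOn ℂ (fun z => J z a b) (polydisc n))
    (hJ'hol : ∀ a b : Fin r, DifferentiableOn ℂ (fun w => J' w a b) (polydisc n))
    (htrans : ∀ z ∈ polydisc n, ∀ w ∈ polydisc n,
      L z w = J z * L (G z) (H w) * J' w) :
    ∀ z ∈ polydisc n, ∀ w ∈ polydisc n,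
      curvMat L z w =
        ((jacobianMat G z)ᵀ ⊗ₖ (J' w)⁻¹) * curvMat L (G z) (H w) *
          ((jacobianMat H w) ⊗ₖ (J' w)) :=
  statement0_general L G H J J' hLinv hLhol hG hH hGhol hHhol hJinv hJ'hol htrans
end

section
/- Let n, r ≥ 1, for 1 ≤ i, j ≤ n let 𝒦^{ij} ∈ M_r(ℂ), and let 𝒦 ∈ M_{nr}(ℂ) be the n×n block matrix with (i,j) block 𝒦^{ij}. (a) Suppose that for every k = (k₁,…,kₙ) ∈ ℂ^n with |k_i| = 1 for all i there exists an invertible J_k ∈ GL(r,ℂ) such that (diag(k₁,…,kₙ) ⊗ J_k) · 𝒦 = 𝒦 · (diag(k₁,…,kₙ) ⊗ J_k). Then 𝒦^{ij} is nilpotent whenever i ≠ j. (b) Suppose, in addition, that for every 1 ≤ i < n there exist k₁,…,kₙ ∈ ℂ with |k_j| = 1 for all j and an invertible J ∈ GL(r,ℂ) such that (P ⊗ J) · 𝒦 = 𝒦 · (P ⊗ J), where P ∈ M_n(ℂ) is the matrix with P_{i,i+1} = k_{i+1}, P_{i+1,i} = k_i, P_{jj} = k_j for j ∉ {i, i+1},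 and all other entries zero. Then the diagonal blocks 𝒦^{11}, 𝒦^{22}, …, 𝒦^{nn} are all similar to one another. -/
open Matrix
open scoped Kronecker

/-!
(a) Taking `k = (1, …, 1, c, 1, …, 1)` with `c` in position `j`, the `(i, j)` block of the
commutation relation reads `J K^{ij} J⁻¹ = c K^{ij}`.  So the finite spectrum of `K^{ij}` is
invariant under multiplication by every unimodular `c`, hence is `{0}`, and `K^{ij}` is
nilpotent because its characteristic polynomial splits over `ℂ`.
(b) The `(i, i+1)` block of `(P ⊗ J) 𝒦 = 𝒦 (P ⊗ J)` reads `k_{i+1} J K^{i+1,i+1} =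
k_{i+1} K^{ii} J`, so consecutive diagonal blocks are similar, and similarity is transitive. -/

/-- The matrix `P` arising from the coordinate-swapping automorphism: `P_{i,i'} = k i'`,
`P_{i',i} = k i`, `P_{jj} = k j` for `j ∉ {i,i'}`, and all other entries `0`. -/
noncomputable def swapMat {n : ℕ} (k : Fin n → ℂ) (i i' : Fin n) :
    Matrix (Fin n) (Fin n) ℂ :=
  Matrix.of fun a b =>
    if a = i ∧ b = i' then k i'
    else if a = i' ∧ b = i then k i
    else if a = b ∧ a ≠ i ∧ a ≠ i' then k a
    else 0

theorem SemiconjBy.isConj {M : Type*} [Monoid M] {u a b : M} (hu : IsUnit u)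
    (h : SemiconjBy u a b) : IsConj a b := by
  obtain ⟨u, rfl⟩ := hu
  exact ⟨u, h⟩

theorem IsConj.spectrum_eq {R A : Type*} [CommSemiring R] [Ring A] [Algebra R A] {a b : A}
    (h : IsConj a b) : spectrum R a = spectrum R b := by
  obtain ⟨u, hu⟩ := h
  rw [← spectrum.units_conjugate (u := u), hu.eq, Units.mul_inv_cancel_right]

theorem Fin.rel_of_rel_succ {n : ℕ} {r : Fin n → Fin n → Prop} (hr : Equivalence r)
    (h : ∀ i i' : Fin n, (i : ℕ) + 1 = i' → r i i') (i j : Fin n) : r i j := by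
  cases n with
  | zero => exact i.elim0
  | succ n =>
    have hzero : ∀ j : Fin (n + 1), r 0 j := fun j ↦ by
      induction j using Fin.induction with
      | zero => exact hr.refl 0
      | succ j ih => exact hr.trans ih (h _ _ (by simp))
    exact hr.trans (hr.symm (hzero i)) (hzero j)

namespace Matrix

section Nilpotent

variable {n K : Type*} [Fintype n] [DecidableEq n] [Field K] [IsAlgClosed K]

theorem isNilpotent_of_spectrum_subset_zero (A : Matrix n n K)
    (h : spectrum K A ⊆ {0}) : IsNilpotent A := by
  set m := Multiset.card A.charpoly.roots
  have hroots : A.charpoly.roots = Multiset.replicate m 0 :=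
    Multiset.eq_replicate_of_mem fun μ hμ ↦
      h (mem_spectrum_iff_isRoot_charpoly.2 (Polynomial.isRoot_of_mem_roots hμ))
  have hcharpoly : A.charpoly = Polynomial.X ^ m := by
    rw [(IsAlgClosed.splits _).eq_prod_roots_of_monic A.charpoly_monic, hroots]
    simp
  refine ⟨m, ?_⟩
  simpa [hcharpoly] using A.aeval_self_charpoly

theorem isNilpotent_of_infinite_isConj_smul (A : Matrix n n K)
    (h : {c : K | IsConj A (c • A)}.Infinite) : IsNilpotent A := by
  refine A.isNilpotent_of_spectrum_subset_zero fun μ hμ ↦ ?_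
  by_contra hμ0
  have hmaps : Set.MapsTo (· * μ) ({c : K | IsConj A (c • A)} \ {0}) (spectrum K A) := by
    rintro c ⟨hc, hc0⟩
    rw [hc.spectrum_eq]
    exact spectrum.smul_mem_smul_iff (r := Units.mk0 c hc0) |>.2 hμ
  exact Set.infinite_of_injOn_mapsTo (mul_left_injective₀ hμ0).injOn hmaps
    (h.sdiff (Set.finite_singleton 0)) A.finite_spectrum

theorem isNilpotent_of_forall_norm_eq_one_isConj_smul (A : Matrix n n ℂ)
    (h : ∀ c : ℂ, ‖c‖ = 1 → IsConj A (c • A)) : IsNilpotent A := by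
  have hsphere : (Metric.sphere (0 : ℂ) 1).Infinite :=
    (isPreconnected_sphere (by simp [Complex.rank_real_complex]) 0 1).infinite_of_nontrivial
      ⟨1, by simp, -1, by simp, by norm_num⟩
  exact A.isNilpotent_of_infinite_isConj_smul <| hsphere.mono fun c hc ↦ h c (by simpa using hc)

end Nilpotent

section Blocks

variable {ι κ R : Type*} [CommRing R]

theorem comp_symm_kronecker (A : Matrix ι ι R) (J : Matrix κ κ R) :
    (comp ι ι κ κ R).symm (A ⊗ₖ J) = A.map (· • J) := by
  ext
  simp

variable [Fintype ι] [Fintype κ] [DecidableEq κ]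

/-- The `(i, j)` block of the relation `(A ⊗ J) 𝒦 = 𝒦 (A ⊗ J)`. -/
theorem sum_smul_mul_block_eq_of_commute_kronecker {A : Matrix ι ι R} {J : Matrix κ κ R}
    {Kb : Matrix ι ι (Matrix κ κ R)} (h : Commute (A ⊗ₖ J) (comp ι ι κ κ R Kb)) (i j : ι) :
    ∑ l, A i l • (J * Kb l j) = ∑ l, A l j • (Kb i l * J) := by
  have hblocks := h.map (compRingEquiv ι κ R).symm
  rw [compRingEquiv_symm_apply, compRingEquiv_symm_apply, comp_symm_kronecker,
    Equiv.symm_apply_apply] at hblocks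
  simpa [mul_apply, smul_mul_assoc, mul_smul_comm] using congrFun (congrFun hblocks.eq i) j

theorem smul_mul_block_eq_of_commute_diagonal_kronecker [DecidableEq ι] {k : ι → R}
    {J : Matrix κ κ R} {Kb : Matrix ι ι (Matrix κ κ R)}
    (h : Commute (diagonal k ⊗ₖ J) (comp ι ι κ κ R Kb)) (i j : ι) : k i • (J * Kb i j) = k j • (Kb i j * J) := by
  simpa [diagonal_apply] using sum_smul_mul_block_eq_of_commute_kronecker h i j

end Blocks

end Matrix

section SwapMat

variable {n : ℕ} {k : Fin n → ℂ} {i i' : Fin n}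

theorem swapMat_apply_left (hii' : i ≠ i') (l : Fin n) :
    swapMat k i i' i l = if l = i' then k i' else 0 := by
  simp [swapMat, hii']

theorem swapMat_apply_right (hii' : i ≠ i') (l : Fin n) :
    swapMat k i i' l i' = if l = i then k i' else 0 := by
  by_cases hl : l = i
  · simp [swapMat, hl]
  · by_cases hl' : l = i' <;> simp [swapMat, hl, hl', hii'.symm]

theorem isConj_block_of_commute_swapMat_kronecker {κ : Type*} [Fintype κ] [DecidableEq κ]
    (hii' : i ≠ i') (hk : k i' ≠ 0) {J : Matrix κ κ ℂ} (hJ : IsUnit J)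
    {Kb : Matrix (Fin n) (Fin n) (Matrix κ κ ℂ)}
    (h : Commute (swapMat k i i' ⊗ₖ J) (comp _ _ _ _ ℂ Kb)) : IsConj (Kb i' i') (Kb i i) := by
  have hblock := sum_smul_mul_block_eq_of_commute_kronecker h i i'
  simp only [swapMat_apply_left hii', swapMat_apply_right hii', ite_smul, zero_smul,
    Finset.sum_ite_eq', Finset.mem_univ, if_true] at hblock
  exact SemiconjBy.isConj hJ (smul_right_injective _ hk hblock)

end SwapMat

theorem statement2_general {n r : ℕ}
    (Kb : Fin n → Fin n → Matrix (Fin r) (Fin r) ℂ)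
    (K : Matrix (Fin n × Fin r) (Fin n × Fin r) ℂ)
    (hK : K = Matrix.of fun p q => Kb p.1 q.1 p.2 q.2)
    (ha : ∀ k : Fin n → ℂ, (∀ i, ‖k i‖ = 1) →
      ∃ Jk : Matrix (Fin r) (Fin r) ℂ, IsUnit Jk ∧
        ((Matrix.diagonal k) ⊗ₖ Jk) * K = K * ((Matrix.diagonal k) ⊗ₖ Jk)) :
    (∀ i j : Fin n, i ≠ j → IsNilpotent (Kb i j)) ∧
    ((∀ i i' : Fin n, (i : ℕ) + 1 = (i' : ℕ) →
        ∃ k : Fin n → ℂ, (∀ j, ‖k j‖ = 1) ∧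
          ∃ Jm : Matrix (Fin r) (Fin r) ℂ, IsUnit Jm ∧
            ((swapMat k i i') ⊗ₖ Jm) * K = K * ((swapMat k i i') ⊗ₖ Jm)) →
      ∀ i j : Fin n, ∃ S : Matrix (Fin r) (Fin r) ℂ,
        IsUnit S ∧ S * Kb i i = Kb j j * S) := by
  replace hK : K = comp _ _ _ _ ℂ Kb := hK
  subst hK
  refine ⟨fun i j hij ↦ ?_, fun hb i j ↦ ?_⟩
  · refine isNilpotent_of_forall_norm_eq_one_isConj_smul _ fun c hc ↦ ?_
    obtain ⟨J, hJ, hcomm⟩ := ha (Function.update 1 j c) fun l ↦ by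
      by_cases hl : l = j <;> simp [hl, hc]
    have hblock := smul_mul_block_eq_of_commute_diagonal_kronecker hcomm i j
    simp only [Function.update_self, Function.update_of_ne hij, Pi.one_apply, one_smul] at hblock
    exact SemiconjBy.isConj hJ (by rw [SemiconjBy, hblock, smul_mul_assoc])
  · have hconj : IsConj (Kb i i) (Kb j j) := by
      refine Fin.rel_of_rel_succ (r := fun a b ↦ IsConj (Kb a a) (Kb b b))
        ⟨fun _ ↦ IsConj.refl _, IsConj.symm, IsConj.trans⟩ (fun a b hab ↦ ?_) i j
      obtain ⟨k, hk, J, hJ, hcomm⟩ := hb a b hab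
      have hab' : a ≠ b := fun h ↦ by simp [h] at hab
      exact (isConj_block_of_commute_swapMat_kronecker hab'
        (norm_ne_zero_iff.1 (by simp [hk])) hJ hcomm).symm
    obtain ⟨S, hS⟩ := hconj
    exact ⟨S, S.isUnit, hS⟩

/-- (a) If the block matrix `𝒦` commutes with `diag(k) ⊗ J_k` for all
unimodular `k`, the off-diagonal blocks are nilpotent.  (b) If moreover `𝒦` commutes with
suitable swap matrices `P ⊗ J`, all diagonal blocks are mutually similar. -/
theorem statement2 {n r : ℕ} (hn : 1 ≤ n) (hr : 1 ≤ r)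
    (Kb : Fin n → Fin n → Matrix (Fin r) (Fin r) ℂ)
    (K : Matrix (Fin n × Fin r) (Fin n × Fin r) ℂ)
    (hK : K = Matrix.of fun p q => Kb p.1 q.1 p.2 q.2)
    (ha : ∀ k : Fin n → ℂ, (∀ i, ‖k i‖ = 1) →
      ∃ Jk : Matrix (Fin r) (Fin r) ℂ, IsUnit Jk ∧
        ((Matrix.diagonal k) ⊗ₖ Jk) * K = K * ((Matrix.diagonal k) ⊗ₖ Jk)) :
    (∀ i j : Fin n, i ≠ j → IsNilpotent (Kb i j)) ∧
    ((∀ i i' : Fin n, (i : ℕ) + 1 = (i' : ℕ) →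
        ∃ k : Fin n → ℂ, (∀ j, ‖k j‖ = 1) ∧
          ∃ Jm : Matrix (Fin r) (Fin r) ℂ, IsUnit Jm ∧
            ((swapMat k i i') ⊗ₖ Jm) * K = K * ((swapMat k i i') ⊗ₖ Jm)) →
      ∀ i j : Fin n, ∃ S : Matrix (Fin r) (Fin r) ℂ,
        IsUnit S ∧ S * Kb i i = Kb j j * S) :=
  statement2_general Kb K hK ha
end

section
/- Let H₁, H₂, Y₁, Y₂ be a multiplicity-free representation of 𝔟² on ℂ^r. Suppose (λ, μ), (λ−1, μ), (λ, μ−1) and (λ−1, μ−1) are all joint eigenvalues of (H₁, H₂), and let V_{(a,b)} denote the joint eigenspace for the joint eigenvalue (a,b). Then: ( Y₁(V_{(λ,μ)}) = {0} or Y₂(V_{(λ−1,μ)}) = {0} ) if and only if ( Y₁(V_{(λ,μ−1)}) = {0} or Y₂(V_{(λ,μ)}) = {0} ). -/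
/-!
`Y₁` maps `V(λ,μ)` into `V(λ-1,μ)`, which has dimension at most one, so
`Y₁ V(λ,μ) = 0 ∨ Y₂ V(λ-1,μ) = 0` holds exactly when `Y₂ Y₁` kills `V(λ,μ)`: if `Y₁ V(λ,μ) ≠ 0`,
it is all of `V(λ-1,μ)`. Symmetrically the right-hand
side says that `Y₁ Y₂` kills `V(λ,μ)`, and `Y₁ Y₂ = Y₂ Y₁`.
-/

open Module Module.End

theorem Submodule.map_eq_bot_or_map_eq_bot_iff_map_comp_eq_bot {K M N P : Type*} [Field K]
    [AddCommGroup M] [Module K M] [AddCommGroup N] [Module K N] [AddCommGroup P] [Module K P]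
    [FiniteDimensional K N] {A : M →ₗ[K] N} (B : N →ₗ[K] P) {S : Submodule K M}
    {T : Submodule K N} (hST : S.map A ≤ T) (hT : finrank K T ≤ 1) :
    S.map A = ⊥ ∨ T.map B = ⊥ ↔ S.map (B ∘ₗ A) = ⊥ := by
  rw [Submodule.map_comp]
  constructor
  · rintro (hA | hB)
    · rw [hA, Submodule.map_bot]
    · exact eq_bot_iff.2 ((Submodule.map_mono hST).trans hB.le)
  · refine fun hBA => or_iff_not_imp_left.2 fun hA => ?_
    have hAT : S.map A = T :=
      Submodule.eq_of_le_of_finrank_le hST (hT.trans (Submodule.one_le_finrank_iff.2 hA))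
    rwa [← hAT]

section

variable {R M : Type*} [CommRing R] [AddCommGroup M] [Module R M]

theorem Module.End.map_eigenspace_le_eigenspace_sub_one {H Y : End R M}
    (h : H * Y - Y * H = -Y) (a : R) : (eigenspace H a).map Y ≤ eigenspace H (a - 1) := by
  rintro _ ⟨v, hv, rfl⟩
  rw [SetLike.mem_coe, mem_eigenspace_iff] at hv
  have hHY : H (Y v) = Y (H v) - Y v := by
    simpa [sub_eq_iff_eq_add, neg_add_eq_sub] using LinearMap.congr_fun h v
  rw [mem_eigenspace_iff, hHY, hv, map_smul, sub_smul, one_smul]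

theorem Module.End.map_eigenspace_le_eigenspace_of_commute {H Y : End R M} (h : Commute H Y)
    (a : R) : (eigenspace H a).map Y ≤ eigenspace H a :=
  Submodule.map_le_iff_le_comap.2 (mapsTo_genEigenspace_of_comm h a 1)

end

theorem statement3_general {r : ℕ} (H₁ H₂ Y₁ Y₂ : Module.End ℂ (Fin r → ℂ))
    (hYY : Commute Y₁ Y₂)
    (hH₁Y₂ : Commute H₁ Y₂) (hH₂Y₁ : Commute H₂ Y₁)
    (hrel₁ : H₁ * Y₁ - Y₁ * H₁ = -Y₁) (hrel₂ : H₂ * Y₂ - Y₂ * H₂ = -Y₂)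
    (hmf : ∀ a b : ℂ, Module.finrank ℂ
      ↥(Module.End.eigenspace H₁ a ⊓ Module.End.eigenspace H₂ b) ≤ 1)
    (lam mu : ℂ)
    (V : ℂ → ℂ → Submodule ℂ (Fin r → ℂ))
    (hV : ∀ a b : ℂ, V a b = Module.End.eigenspace H₁ a ⊓ Module.End.eigenspace H₂ b) :
    (Submodule.map Y₁ (V lam mu) = ⊥ ∨ Submodule.map Y₂ (V (lam - 1) mu) = ⊥) ↔
      (Submodule.map Y₁ (V lam (mu - 1)) = ⊥ ∨ Submodule.map Y₂ (V lam mu) = ⊥) := by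
  have hY₁ : (V lam mu).map Y₁ ≤ V (lam - 1) mu := by
    rw [hV, hV]
    exact (Submodule.map_inf_le _).trans <| inf_le_inf
      (map_eigenspace_le_eigenspace_sub_one hrel₁ lam)
      (map_eigenspace_le_eigenspace_of_commute hH₂Y₁ mu)
  have hY₂ : (V lam mu).map Y₂ ≤ V lam (mu - 1) := by
    rw [hV, hV]
    exact (Submodule.map_inf_le _).trans <| inf_le_inf
      (map_eigenspace_le_eigenspace_of_commute hH₁Y₂ lam)
      (map_eigenspace_le_eigenspace_sub_one hrel₂ mu)
  rw [Submodule.map_eq_bot_or_map_eq_bot_iff_map_comp_eq_bot Y₂ hY₁ (hV _ _ ▸ hmf _ _), or_comm,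
    Submodule.map_eq_bot_or_map_eq_bot_iff_map_comp_eq_bot Y₁ hY₂ (hV _ _ ▸ hmf _ _),
    ← mul_eq_comp, ← mul_eq_comp, hYY.eq]

/-- For a multiplicity-free representation `H₁,H₂,Y₁,Y₂` of `𝔟²` on `ℂʳ`,
with joint eigenvalues `(λ,μ)`, `(λ−1,μ)`, `(λ,μ−1)`, `(λ−1,μ−1)`, one has
`Y₁(V_{(λ,μ)}) = 0 ∨ Y₂(V_{(λ−1,μ)}) = 0` iff `Y₁(V_{(λ,μ−1)}) = 0 ∨ Y₂(V_{(λ,μ)}) = 0`. -/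
theorem statement3 {r : ℕ} (H₁ H₂ Y₁ Y₂ : Module.End ℂ (Fin r → ℂ))
    (hHH : Commute H₁ H₂) (hYY : Commute Y₁ Y₂)
    (hH₁Y₂ : Commute H₁ Y₂) (hH₂Y₁ : Commute H₂ Y₁)
    (hrel₁ : H₁ * Y₁ - Y₁ * H₁ = -Y₁) (hrel₂ : H₂ * Y₂ - Y₂ * H₂ = -Y₂)
    (hdiag₁ : (⨆ μ : ℂ, Module.End.eigenspace H₁ μ) = ⊤)
    (hdiag₂ : (⨆ μ : ℂ, Module.End.eigenspace H₂ μ) = ⊤)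
    (hmf : ∀ a b : ℂ, Module.finrank ℂ
      ↥(Module.End.eigenspace H₁ a ⊓ Module.End.eigenspace H₂ b) ≤ 1)
    (lam mu : ℂ)
    (V : ℂ → ℂ → Submodule ℂ (Fin r → ℂ))
    (hV : ∀ a b : ℂ, V a b = Module.End.eigenspace H₁ a ⊓ Module.End.eigenspace H₂ b)
    (h00 : V lam mu ≠ ⊥) (h10 : V (lam - 1) mu ≠ ⊥)
    (h01 : V lam (mu - 1) ≠ ⊥) (h11 : V (lam - 1) (mu - 1) ≠ ⊥) :
    (Submodule.map Y₁ (V lam mu) = ⊥ ∨ Submodule.map Y₂ (V (lam - 1) mu) = ⊥) ↔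
      (Submodule.map Y₁ (V lam (mu - 1)) = ⊥ ∨ Submodule.map Y₂ (V lam mu) = ⊥) :=
  statement3_general H₁ H₂ Y₁ Y₂ hYY hH₁Y₂ hH₂Y₁ hrel₁ hrel₂ hmf lam mu V hV
end

section
/- Let H₁, H₂, Y₁, Y₂ be a multiplicity-free representation of 𝔟² on ℂ^r, where each H_i is diagonalizable with all eigenvalues real. Suppose for some i ∈ {1,2} that α < β are eigenvalues of H_i such that no x ∈ ℝ with α < x < β is an eigenvalue of H_i, and that β − α ≠ 1. Then the representation is decomposable, i.e., ℂ^r = W₁ ⊕ W₂ for two nonzero subspaces W₁, W₂ each invariant under H₁, H₂, Y₁ and Y₂. -/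
/-!
If `H` is diagonalizable and `H Y - Y H = -Y`, then `Y` maps the `μ`-eigenspace of `H` into the
`(μ - 1)`-eigenspace, while every operator commuting with `H` preserves each eigenspace. Hence,
for any set `S` of scalars such that, whenever `μ` and `μ - 1` are both eigenvalues of `H`, they
lie both in `S` or both outside it, the sums of the eigenspaces over `S` and over its complement
are complementary invariant subspaces. Given a gap `α < β` between consecutive eigenvalues of
`H_i`, take for `S` the coset `α + ℤ` when `β - α < 1` and the half-plane `Re μ ≤ α` when
`β - α > 1`.
-/

/-- A subspace invariant under all four operators of a representation of `𝔟²`. -/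
def InvariantB2 {r : ℕ} (H₁ H₂ Y₁ Y₂ : Module.End ℂ (Fin r → ℂ))
    (W : Submodule ℂ (Fin r → ℂ)) : Prop :=
  (∀ x ∈ W, H₁ x ∈ W) ∧ (∀ x ∈ W, H₂ x ∈ W) ∧ (∀ x ∈ W, Y₁ x ∈ W) ∧ (∀ x ∈ W, Y₂ x ∈ W)

open Set

namespace Module.End

variable {R M : Type*} [CommRing R] [AddCommGroup M] [Module R M]

def eigenspaceSup (f : End R M) (S : Set R) : Submodule R M :=
  ⨆ μ ∈ S, f.eigenspace μ

lemma apply_mem_eigenspace_sub_one {f g : End R M} (hfg : f * g - g * f = -g) {μ : R} {v : M}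
    (hv : v ∈ f.eigenspace μ) : g v ∈ f.eigenspace (μ - 1) := by
  rw [mem_eigenspace_iff] at hv ⊢
  have h := congrArg (· v) hfg
  simp only [LinearMap.sub_apply, Module.End.mul_apply, LinearMap.neg_apply, hv, map_smul] at h
  linear_combination (norm := module) h

lemma eigenspaceSup_ne_bot {f : End R M} {S : Set R} {μ : R} (hμS : μ ∈ S)
    (hμ : f.HasEigenvalue μ) : f.eigenspaceSup S ≠ ⊥ :=
  ne_bot_of_le_ne_bot hμ (le_biSup f.eigenspace hμS)

lemma mapsTo_eigenspaceSup_of_commute {f g : End R M} (h : Commute f g) (S : Set R) :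
    MapsTo g (f.eigenspaceSup S) (f.eigenspaceSup S) := by
  have : f.eigenspaceSup S ≤ (f.eigenspaceSup S).comap g :=
    iSup₂_le fun μ hμ v hv =>
      le_biSup f.eigenspace hμ (mapsTo_genEigenspace_of_comm h μ 1 hv)
  exact this

lemma mapsTo_eigenspaceSup_of_commutator_eq_neg {f g : End R M} (hfg : f * g - g * f = -g)
    {S : Set R} (hS : ∀ μ ∈ S, f.HasEigenvalue μ → f.HasEigenvalue (μ - 1) → μ - 1 ∈ S) :
    MapsTo g (f.eigenspaceSup S) (f.eigenspaceSup S) := by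
  have : f.eigenspaceSup S ≤ (f.eigenspaceSup S).comap g := by
    refine iSup₂_le fun μ hμS v hv => ?_
    obtain rfl | hv0 := eq_or_ne v 0
    · simp
    have hgv := apply_mem_eigenspace_sub_one hfg hv
    obtain hgv0 | hgv0 := eq_or_ne (g v) 0
    · simp [hgv0]
    exact le_biSup f.eigenspace
      (hS μ hμS (hasEigenvalue_of_hasEigenvector ⟨hv, hv0⟩)
        (hasEigenvalue_of_hasEigenvector ⟨hgv, hgv0⟩)) hgv
  exact this

lemma mapsTo_eigenspaceSup {f g h : End R M} (hfg : f * g - g * f = -g)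
    {S : Set R} (hS : ∀ μ ∈ S, f.HasEigenvalue μ → f.HasEigenvalue (μ - 1) → μ - 1 ∈ S)
    (hh : Commute f h ∨ h = g) : MapsTo h (f.eigenspaceSup S) (f.eigenspaceSup S) := by
  obtain hh | rfl := hh
  exacts [mapsTo_eigenspaceSup_of_commute hh S, mapsTo_eigenspaceSup_of_commutator_eq_neg hfg hS]

lemma isCompl_eigenspaceSup_compl [IsDomain R] [IsTorsionFree R M] {f : End R M}
    (hf : ⨆ μ, f.eigenspace μ = ⊤) (S : Set R) :
    IsCompl (f.eigenspaceSup S) (f.eigenspaceSup Sᶜ) where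
  disjoint := f.eigenspaces_iSupIndep.disjoint_biSup_biSup disjoint_compl_right
  codisjoint := by
    rw [codisjoint_iff, eigenspaceSup, eigenspaceSup, ← iSup_union, Set.union_compl_self,
      iSup_univ, hf]

end Module.End

open Module.End

lemma exists_shift_invariant_separating_of_gap {Λ : Set ℂ} (hreal : ∀ μ ∈ Λ, ∃ x : ℝ, μ = x)
    {α β : ℝ} (hαβ : α < β) (hgap : ∀ x : ℝ, α < x → x < β → (x : ℂ) ∉ Λ)
    (hne : β - α ≠ 1) :
    ∃ S : Set ℂ, (α : ℂ) ∈ S ∧ (β : ℂ) ∉ S ∧ ∀ μ ∈ Λ, μ - 1 ∈ Λ → (μ ∈ S ↔ μ - 1 ∈ S) := by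
  obtain hlt | hgt := hne.lt_or_gt
  · refine ⟨{μ | ∃ n : ℤ, μ = α + n}, ⟨0, by simp⟩, ?_, fun μ _ _ => ?_⟩
    · rintro ⟨n, hn⟩
      have hn : β = α + n := by exact_mod_cast hn
      have hpos : (0 : ℤ) < n := by exact_mod_cast (show (0 : ℝ) < n by linarith)
      have hlt_one : n < 1 := by exact_mod_cast (show (n : ℝ) < 1 by linarith)
      omega
    · exact ⟨fun ⟨n, hn⟩ => ⟨n - 1, by push_cast; linear_combination hn⟩,
        fun ⟨n, hn⟩ => ⟨n + 1, by push_cast; linear_combination hn⟩⟩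
  · refine ⟨{μ | μ.re ≤ α}, by simp, by simpa using hαβ, fun μ hμ _ => ?_⟩
    simp only [Set.mem_ofPred_eq, Complex.sub_re, Complex.one_re]
    refine ⟨fun h => by linarith, fun h => ?_⟩
    by_contra! hα
    obtain ⟨x, rfl⟩ := hreal μ hμ
    simp only [Complex.ofReal_re] at h hα
    exact hgap x hα (by linarith) hμ

lemma invariantB2_iff {r : ℕ} {H₁ H₂ Y₁ Y₂ : Module.End ℂ (Fin r → ℂ)}
    {W : Submodule ℂ (Fin r → ℂ)} :
    InvariantB2 H₁ H₂ Y₁ Y₂ W ↔ ∀ D ∈ ({H₁, H₂, Y₁, Y₂} : Set _), MapsTo D W W := by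
  simp [InvariantB2, MapsTo]

theorem statement4_general {r : ℕ} (H₁ H₂ Y₁ Y₂ : Module.End ℂ (Fin r → ℂ))
    (hHH : Commute H₁ H₂)
    (hH₁Y₂ : Commute H₁ Y₂) (hH₂Y₁ : Commute H₂ Y₁)
    (hrel₁ : H₁ * Y₁ - Y₁ * H₁ = -Y₁) (hrel₂ : H₂ * Y₂ - Y₂ * H₂ = -Y₂)
    (hdiag₁ : (⨆ μ : ℂ, Module.End.eigenspace H₁ μ) = ⊤)
    (hdiag₂ : (⨆ μ : ℂ, Module.End.eigenspace H₂ μ) = ⊤)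
    (hreal₁ : ∀ μ : ℂ, Module.End.HasEigenvalue H₁ μ → ∃ x : ℝ, μ = (x : ℂ))
    (hreal₂ : ∀ μ : ℂ, Module.End.HasEigenvalue H₂ μ → ∃ x : ℝ, μ = (x : ℂ))
    (Hi : Module.End ℂ (Fin r → ℂ)) (hi : Hi = H₁ ∨ Hi = H₂)
    (α β : ℝ) (hαβ : α < β)
    (hα : Module.End.HasEigenvalue Hi (α : ℂ))
    (hβ : Module.End.HasEigenvalue Hi (β : ℂ))
    (hgap : ∀ x : ℝ, α < x → x < β → ¬ Module.End.HasEigenvalue Hi (x : ℂ))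
    (hne : β - α ≠ 1) :
    ∃ W₁ W₂ : Submodule ℂ (Fin r → ℂ), W₁ ≠ ⊥ ∧ W₂ ≠ ⊥ ∧ IsCompl W₁ W₂ ∧
      InvariantB2 H₁ H₂ Y₁ Y₂ W₁ ∧ InvariantB2 H₁ H₂ Y₁ Y₂ W₂ := by
  simp only [invariantB2_iff]
  obtain ⟨Yi, hrel, hdiag, hreal, hops⟩ : ∃ Yi, Hi * Yi - Yi * Hi = -Yi ∧
      (⨆ μ, Hi.eigenspace μ) = ⊤ ∧ (∀ μ, Hi.HasEigenvalue μ → ∃ x : ℝ, μ = x) ∧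
      ∀ D ∈ ({H₁, H₂, Y₁, Y₂} : Set _), Commute Hi D ∨ D = Yi := by
    rcases hi with rfl | rfl
    · refine ⟨Y₁, hrel₁, hdiag₁, hreal₁, ?_⟩
      simp only [Set.mem_insert_iff, Set.mem_singleton_iff]
      rintro D (rfl | rfl | rfl | rfl)
      exacts [.inl (.refl _), .inl hHH, .inr rfl, .inl hH₁Y₂]
    · refine ⟨Y₂, hrel₂, hdiag₂, hreal₂, ?_⟩
      simp only [Set.mem_insert_iff, Set.mem_singleton_iff]
      rintro D (rfl | rfl | rfl | rfl)
      exacts [.inl hHH.symm, .inl (.refl _), .inl hH₂Y₁, .inr rfl]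
  obtain ⟨S, hαS, hβS, hS⟩ :=
    exists_shift_invariant_separating_of_gap (Λ := {μ | Hi.HasEigenvalue μ}) hreal hαβ hgap hne
  refine ⟨Hi.eigenspaceSup S, Hi.eigenspaceSup Sᶜ, eigenspaceSup_ne_bot hαS hα,
    eigenspaceSup_ne_bot hβS hβ, isCompl_eigenspaceSup_compl hdiag S, ?_, ?_⟩
  · exact fun D hD => mapsTo_eigenspaceSup hrel (fun μ hμS hμ hμ' => (hS μ hμ hμ').1 hμS)
      (hops D hD)
  · exact fun D hD => mapsTo_eigenspaceSup hrel (fun μ hμS hμ hμ' => mt (hS μ hμ hμ').2 hμS)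
      (hops D hD)

/-- A multiplicity-free representation of `𝔟²` on `ℂʳ` with real
eigenvalues having a spectral gap `β − α ≠ 1` between consecutive eigenvalues of some `H_i`
is decomposable. -/
theorem statement4 {r : ℕ} (H₁ H₂ Y₁ Y₂ : Module.End ℂ (Fin r → ℂ))
    (hHH : Commute H₁ H₂) (hYY : Commute Y₁ Y₂)
    (hH₁Y₂ : Commute H₁ Y₂) (hH₂Y₁ : Commute H₂ Y₁)
    (hrel₁ : H₁ * Y₁ - Y₁ * H₁ = -Y₁) (hrel₂ : H₂ * Y₂ - Y₂ * H₂ = -Y₂)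
    (hdiag₁ : (⨆ μ : ℂ, Module.End.eigenspace H₁ μ) = ⊤)
    (hdiag₂ : (⨆ μ : ℂ, Module.End.eigenspace H₂ μ) = ⊤)
    (hreal₁ : ∀ μ : ℂ, Module.End.HasEigenvalue H₁ μ → ∃ x : ℝ, μ = (x : ℂ))
    (hreal₂ : ∀ μ : ℂ, Module.End.HasEigenvalue H₂ μ → ∃ x : ℝ, μ = (x : ℂ))
    (hmf : ∀ a b : ℂ, Module.finrank ℂ
      ↥(Module.End.eigenspace H₁ a ⊓ Module.End.eigenspace H₂ b) ≤ 1)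
    (Hi : Module.End ℂ (Fin r → ℂ)) (hi : Hi = H₁ ∨ Hi = H₂)
    (α β : ℝ) (hαβ : α < β)
    (hα : Module.End.HasEigenvalue Hi (α : ℂ))
    (hβ : Module.End.HasEigenvalue Hi (β : ℂ))
    (hgap : ∀ x : ℝ, α < x → x < β → ¬ Module.End.HasEigenvalue Hi (x : ℂ))
    (hne : β - α ≠ 1) :
    ∃ W₁ W₂ : Submodule ℂ (Fin r → ℂ), W₁ ≠ ⊥ ∧ W₂ ≠ ⊥ ∧ IsCompl W₁ W₂ ∧
      InvariantB2 H₁ H₂ Y₁ Y₂ W₁ ∧ InvariantB2 H₁ H₂ Y₁ Y₂ W₂ :=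
  statement4_general H₁ H₂ Y₁ Y₂ hHH hH₁Y₂ hH₂Y₁ hrel₁ hrel₂ hdiag₁ hdiag₂ hreal₁ hreal₂ Hi hi α β
    hαβ hα hβ hgap hne
end

section
/- Let H₁, H₂, Y₁, Y₂ be a multiplicity-free representation of 𝔟² on ℂ^r such that the set of eigenvalues of H₁ is exactly {λ₁, λ₁−1, …, λ₁−s} and the set of eigenvalues of H₂ is exactly {λ₂, λ₂−1, …, λ₂−t}, for some λ₁, λ₂ ∈ ℝ and integers s, t ≥ 0. Let S := {(i,j) ∈ {0,…,s}×{0,…,t} : (λ₁−i, λ₂−j) is a joint eigenvalue of (H₁,H₂)}, and for θ = (i,j) ∈ S let V_θ denote the (one-dimensional) joint eigenspace for (λ₁−i, λ₂−j). Consider the conditions: (P1) if (i,j₁) ∈ S and (i,j₂) ∈ S and j₁ ≤ j ≤ j₂, then (i,j) ∈ S; (P2) if (i₁,j) ∈ S and (i₂,j) ∈ S and i₁ ≤ i ≤ i₂, then (i,j) ∈ S; (P3) for every 0 ≤ i < s there exists j with (i,j) ∈ S and (i+1,j) ∈ S; (P4) whenever θ ∈ S and θ + ε₁ ∈ S then Y₁(V_θ)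 = V_{θ+ε₁}, and whenever θ ∈ S and θ + ε₂ ∈ S then Y₂(V_θ) = V_{θ+ε₂}, where ε₁ = (1,0), ε₂ = (0,1). Then the representation is indecomposable if and only if P1, P2, P3 and P4 all hold. -/
open Module

section Staircase

variable {E₁ E₂ : ℕ → ℕ → Prop} {s : ℕ}

/-- `E₁ i j` is the edge `(i, j) → (i + 1, j)` and `E₂ i j` the edge `(i, j) → (i, j + 1)`;
a cut is an up-set of `ℕ × ℕ` that no edge enters. -/
structure IsCut (E₁ E₂ A : ℕ → ℕ → Prop) : Prop where
  succ_fst : ∀ i j, A i j → A (i + 1) j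
  succ_snd : ∀ i j, A i j → A i (j + 1)
  not_edge_fst : ∀ i j, ¬A i j → A (i + 1) j → ¬E₁ i j
  not_edge_snd : ∀ i j, ¬A i j → A i (j + 1) → ¬E₂ i j

theorem IsCut.mono {A : ℕ → ℕ → Prop} (hA : IsCut E₁ E₂ A) {i i' j j' : ℕ} (h : A i j)
    (hi : i ≤ i') (hj : j ≤ j') : A i' j' := by
  induction j', hj using Nat.le_induction with
  | base =>
    induction i', hi using Nat.le_induction with
    | base => exact h
    | succ i' _ ih => exact hA.succ_fst i' j ih
  | succ j' _ ih => exact hA.succ_snd i' j' ih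

theorem IsCut.flip {A : ℕ → ℕ → Prop} (hA : IsCut (flip E₂) (flip E₁) A) :
    IsCut E₁ E₂ (flip A) :=
  ⟨fun i j ↦ hA.succ_snd j i, fun i j ↦ hA.succ_fst j i,
    fun i j ↦ hA.not_edge_snd j i, fun i j ↦ hA.not_edge_fst j i⟩

theorem exists_chain {α : Type*} {B : ℕ → α → Prop} {R : ℕ → α → α → Prop}
    (up : ∀ j a, B j a → ∃ b, B (j + 1) b ∧ R j a b)
    (down : ∀ j b, B (j + 1) b → ∃ a, B j a ∧ R j a b) {j₀ : ℕ} {a₀ : α} (h₀ : B j₀ a₀) :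
    ∃ g : ℕ → α, g j₀ = a₀ ∧ ∀ j, B j (g j) ∧ R j (g j) (g (j + 1)) := by
  have below : ∀ n a, B n a →
      ∃ g : ℕ → α, g n = a ∧ ∀ j < n, B j (g j) ∧ R j (g j) (g (j + 1)) := by
    intro n
    induction n with
    | zero => exact fun a _ ↦ ⟨fun _ ↦ a, rfl, fun j hj ↦ absurd hj (Nat.not_lt_zero j)⟩
    | succ n ih =>
      intro b hb
      obtain ⟨a, ha, hab⟩ := down n b hb
      obtain ⟨g, rfl, hg⟩ := ih a ha
      refine ⟨Function.update g (n + 1) b, by simp, fun j hj ↦ ?_⟩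
      rcases Nat.lt_succ_iff_lt_or_eq.mp hj with hj | rfl
      · simpa [Function.update_of_ne (show j ≠ n + 1 by omega),
          Function.update_of_ne (show j + 1 ≠ n + 1 by omega)] using hg j hj
      · simpa [Function.update_of_ne (show j ≠ j + 1 by omega)] using ⟨ha, hab⟩
  choose! next hnext using up
  let f : ℕ → α := fun n ↦ Nat.rec a₀ (fun n a ↦ next (j₀ + n) a) n
  have hf₀ : f 0 = a₀ := rfl
  have hf_succ : ∀ n, f (n + 1) = next (j₀ + n) (f n) := fun _ ↦ rfl
  have hf : ∀ n, B (j₀ + n) (f n) := fun n ↦ by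
    induction n with
    | zero => exact h₀
    | succ n ih => exact (hnext _ _ ih).1
  obtain ⟨g, hg₀, hg⟩ := below j₀ a₀ h₀
  refine ⟨fun j ↦ if j < j₀ then g j else f (j - j₀), by simp [hf₀], fun j ↦ ?_⟩
  rcases lt_or_ge j j₀ with hj | hj
  · rcases (Nat.succ_le_of_lt hj).lt_or_eq with hj' | hj'
    · simpa [hj, hj'] using hg j hj
    · subst hj'
      simpa [hf₀, hg₀] using hg j hj
  · simp only [show ¬j < j₀ by omega, show ¬j + 1 < j₀ by omega, if_false,
      show j + 1 - j₀ = j - j₀ + 1 by omega, hf_succ]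
    have hB := hf (j - j₀)
    rw [Nat.add_sub_cancel' hj] at hB
    rw [Nat.add_sub_cancel' hj]
    exact ⟨hB, (hnext j _ hB).2⟩

def NoEdgeInto (E₁ : ℕ → ℕ → Prop) (j k : ℕ) : Prop := ∀ i, i + 1 = k → ¬E₁ i j

theorem exists_step_up (hsq : ∀ i j, E₁ i j ∧ E₂ (i + 1) j ↔ E₂ i j ∧ E₁ i (j + 1))
    {j m : ℕ} (hm : NoEdgeInto E₁ j m) :
    ∃ k, NoEdgeInto E₁ (j + 1) k ∧ k ≤ m ∧ ∀ i, k ≤ i → i < m → ¬E₂ i j := by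
  classical
  set k := Nat.findGreatest (NoEdgeInto E₁ (j + 1)) m
  have hrun : ∀ i, k ≤ i → i < m → E₁ i (j + 1) := fun i hki him ↦ by
    have := Nat.findGreatest_is_greatest (show k < i + 1 by omega) (show i + 1 ≤ m by omega)
    simpa [NoEdgeInto] using this
  refine ⟨k, Nat.findGreatest_spec (Nat.zero_le m) fun i hi ↦ absurd hi i.succ_ne_zero,
    Nat.findGreatest_le m, fun i hki him hE ↦ ?_⟩
  -- the square condition pushes the edge `E₂ i j` to the right until it reaches column `m`
  induction hd : m - (i + 1) generalizing i with
  | zero => exact hm i (by omega) ((hsq i j).2 ⟨hE, hrun i hki him⟩).1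
  | succ d ih =>
    exact ih (i + 1) (by omega) (by omega) ((hsq i j).2 ⟨hE, hrun i hki him⟩).2 (by omega)

theorem exists_step_down (hsq : ∀ i j, E₁ i j ∧ E₂ (i + 1) j ↔ E₂ i j ∧ E₁ i (j + 1))
    (hbd : ∀ i j, E₁ i j → i < s) {j k : ℕ} (hk : NoEdgeInto E₁ (j + 1) k) :
    ∃ m, NoEdgeInto E₁ j m ∧ k ≤ m ∧ ∀ i, k ≤ i → i < m → ¬E₂ i j := by
  classical
  have hex : ∃ m, k ≤ m ∧ NoEdgeInto E₁ j m :=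
    ⟨max k (s + 1), le_max_left _ _, fun i hi hE ↦ by have := hbd i j hE; omega⟩
  obtain ⟨hkm, hm⟩ := Nat.find_spec hex
  refine ⟨Nat.find hex, hm, hkm, fun i hki him ↦ ?_⟩
  have hrun : ∀ i, k ≤ i → i < Nat.find hex → ∃ i', i' + 1 = i ∧ E₁ i' j := fun i hki him ↦ by
    simpa [NoEdgeInto, hki] using Nat.find_min hex him
  -- the square condition pushes the edge `E₂ i j` to the left until it reaches column `k`
  induction i, hki using Nat.le_induction with
  | base =>
    obtain ⟨i', rfl, hE₁⟩ := hrun k le_rfl him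
    exact fun hE ↦ hk i' rfl ((hsq i' j).1 ⟨hE₁, hE⟩).2
  | succ i hki ih =>
    obtain ⟨i', hi', hE₁⟩ := hrun (i + 1) (by omega) him
    rw [Nat.succ_injective hi'] at hE₁
    exact fun hE ↦ ih (by omega) ((hsq i j).1 ⟨hE₁, hE⟩).1

theorem exists_isCut_of_not_edge_fst (hsq : ∀ i j, E₁ i j ∧ E₂ (i + 1) j ↔ E₂ i j ∧ E₁ i (j + 1))
    (hbd : ∀ i j, E₁ i j → i < s) {i₀ j₀ : ℕ} (h : ¬E₁ i₀ j₀) :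
    ∃ A, IsCut E₁ E₂ A ∧ A (i₀ + 1) j₀ ∧ ¬A i₀ j₀ := by
  obtain ⟨g, hg₀, hg⟩ := exists_chain (B := NoEdgeInto E₁)
    (R := fun j m k ↦ k ≤ m ∧ ∀ i, k ≤ i → i < m → ¬E₂ i j)
    (fun _ _ hm ↦ exists_step_up hsq hm) (fun _ _ hk ↦ exists_step_down hsq hbd hk)
    (j₀ := j₀) (a₀ := i₀ + 1) fun i hi ↦ by rwa [Nat.succ_injective hi]
  refine ⟨fun i j ↦ g j ≤ i, ⟨fun i j h ↦ by omega, fun i j h ↦ (hg j).2.1.trans h,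
    fun i j h h' ↦ (hg j).1 i (by omega), fun i j h h' ↦ (hg j).2.2 i h' (by omega)⟩,
    by omega, by omega⟩

theorem exists_isCut_of_not_edge_snd (hsq : ∀ i j, E₁ i j ∧ E₂ (i + 1) j ↔ E₂ i j ∧ E₁ i (j + 1))
    {t : ℕ} (hbd : ∀ i j, E₂ i j → j < t) {i₀ j₀ : ℕ} (h : ¬E₂ i₀ j₀) :
    ∃ A, IsCut E₁ E₂ A ∧ A i₀ (j₀ + 1) ∧ ¬A i₀ j₀ := by
  obtain ⟨A, hA, hin, hout⟩ := exists_isCut_of_not_edge_fst (E₁ := flip E₂) (E₂ := flip E₁)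
    (fun i j ↦ (hsq j i).symm) (fun i j ↦ hbd j i) h
  exact ⟨flip A, hA.flip, hin, hout⟩

end Staircase

theorem iff_of_edge_iff {S P : ℕ → ℕ → Prop} {s : ℕ} (hs : ∀ i j, S i j → i ≤ s)
    (hcol : ∀ i j₁ j j₂, S i j₁ → S i j₂ → j₁ ≤ j → j ≤ j₂ → S i j)
    (hrow : ∀ i < s, ∃ j, S i j ∧ S (i + 1) j)
    (hP₁ : ∀ i j, S i j → S (i + 1) j → (P i j ↔ P (i + 1) j))
    (hP₂ : ∀ i j, S i j → S i (j + 1) → (P i j ↔ P i (j + 1)))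
    {a b c d : ℕ} (hab : S a b) (hcd : S c d) : P a b ↔ P c d := by
  have col_le : ∀ i j j', j ≤ j' → S i j → S i j' → (P i j ↔ P i j') := by
    intro i j j' hj
    induction j', hj using Nat.le_induction with
    | base => exact fun _ _ ↦ Iff.rfl
    | succ j' hj ih =>
      intro h h'
      have hmid := hcol i j j' (j' + 1) h h' hj (Nat.le_succ j')
      exact (ih h hmid).trans (hP₂ i j' hmid h')
  have col : ∀ i j j', S i j → S i j' → (P i j ↔ P i j') := fun i j j' h h' ↦
    (le_total j j').elim (fun hj ↦ col_le i j j' hj h h') (fun hj ↦ (col_le i j' j hj h' h).symm)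
  have across : ∀ n i j j', S i j → S (i + n) j' → (P i j ↔ P (i + n) j') := by
    intro n
    induction n with
    | zero => exact col
    | succ n ih =>
      intro i j j' h h'
      obtain ⟨k, hk, hk'⟩ := hrow (i + n) (by have := hs _ _ h'; omega)
      exact ((ih i j k h hk).trans (hP₁ _ _ hk hk')).trans (col _ k j' hk' h')
  rcases le_total a c with hac | hca
  · obtain ⟨n, rfl⟩ := Nat.exists_eq_add_of_le hac
    exact across n a b d hab hcd
  · obtain ⟨n, rfl⟩ := Nat.exists_eq_add_of_le hca
    exact (across n c d b hcd hab).symm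

section LinearAlgebra

variable {K M : Type*} [Field K] [AddCommGroup M] [Module K M]

theorem Submodule.eq_of_le_of_finrank_le_one [FiniteDimensional K M] {U U' : Submodule K M}
    (hle : U ≤ U') (hU' : finrank K U' ≤ 1) (hU : U ≠ ⊥) : U = U' :=
  eq_of_le_of_finrank_le hle (hU'.trans (one_le_finrank_iff.2 hU))

theorem Submodule.le_or_le_of_finrank_le_one [FiniteDimensional K M] {U W₁ W₂ : Submodule K M}
    (hU : finrank K U ≤ 1) (h : U ≤ U ⊓ W₁ ⊔ U ⊓ W₂) : U ≤ W₁ ∨ U ≤ W₂ := by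
  by_cases h₁ : U ⊓ W₁ = ⊥
  · exact Or.inr (by simpa [h₁] using h)
  · exact Or.inl (eq_of_le_of_finrank_le_one inf_le_left hU h₁ ▸ inf_le_right)

theorem Submodule.map_map_ne_bot_iff [FiniteDimensional K M] {U U' : Submodule K M}
    {f g : End K M} (hf : U.map f ≤ U') (hU' : finrank K U' ≤ 1) :
    (U.map f).map g ≠ ⊥ ↔ U.map f ≠ ⊥ ∧ U'.map g ≠ ⊥ := by
  constructor
  · intro h
    have hf₀ : U.map f ≠ ⊥ := fun h₀ ↦ h (by rw [h₀, map_bot])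
    exact ⟨hf₀, eq_of_le_of_finrank_le_one hf hU' hf₀ ▸ h⟩
  · rintro ⟨hf₀, hg⟩
    rwa [eq_of_le_of_finrank_le_one hf hU' hf₀]

theorem Submodule.biSup_mem_invtSubmodule {ι : Type*} {V : ι → Submodule K M} {s : Set ι}
    {f : End K M} (h : ∀ i ∈ s, (V i).map f ≤ ⨆ j ∈ s, V j) :
    (⨆ i ∈ s, V i) ∈ f.invtSubmodule := by
  simp only [End.mem_invtSubmodule_iff_map_le, Submodule.map_iSup]
  exact iSup₂_le h

theorem Submodule.le_iff_le_of_map_eq {W₁ W₂ U U' : Submodule K M} {f : End K M}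
    (hW : IsCompl W₁ W₂)
    (hf : W₁ ∈ f.invtSubmodule ∧ W₂ ∈ f.invtSubmodule) (hU : U ≤ W₁ ∨ U ≤ W₂) (hU' : U' ≠ ⊥)
    (hmap : U.map f = U') : U ≤ W₁ ↔ U' ≤ W₁ := by
  have hmono : ∀ {W}, W ∈ f.invtSubmodule → U ≤ W → U' ≤ W := fun hW hle ↦
    hmap ▸ (Submodule.map_mono hle).trans ((End.mem_invtSubmodule_iff_map_le f).1 hW)
  refine ⟨hmono hf.1, fun h ↦ hU.resolve_right fun h₂ ↦ hU' ?_⟩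
  exact le_bot_iff.1 (hW.disjoint h (hmono hf.2 h₂))

namespace Module.End

theorem mem_invtSubmodule_of_le_eigenspace {f : End K M} {μ : K} {p : Submodule K M}
    (h : p ≤ f.eigenspace μ) : p ∈ f.invtSubmodule := fun x hx ↦ by
  rw [Submodule.mem_comap, mem_eigenspace_iff.1 (h hx)]
  exact p.smul_mem μ hx

theorem mem_eigenspace_of_add_mem {f : End K M} {μ : K} {W₁ W₂ : Submodule K M}
    (hd : Disjoint W₁ W₂) (h₁ : W₁ ∈ f.invtSubmodule) (h₂ : W₂ ∈ f.invtSubmodule)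
    {w₁ w₂ : M} (hw₁ : w₁ ∈ W₁) (hw₂ : w₂ ∈ W₂) (h : w₁ + w₂ ∈ f.eigenspace μ) :
    w₁ ∈ f.eigenspace μ := by
  rw [mem_eigenspace_iff, map_add, smul_add] at h
  have heq : f w₁ - μ • w₁ = μ • w₂ - f w₂ := by rw [sub_eq_sub_iff_add_eq_add, h, add_comm]
  rw [mem_eigenspace_iff, ← sub_eq_zero]
  refine Submodule.disjoint_def.1 hd _ (sub_mem (h₁ hw₁) (W₁.smul_mem μ hw₁)) ?_
  rw [heq]
  exact sub_mem (W₂.smul_mem μ hw₂) (h₂ hw₂)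

theorem inf_eigenspace_le_sup_of_isCompl {f g : End K M} {a b : K} {W₁ W₂ : Submodule K M}
    (hW : IsCompl W₁ W₂) (hf₁ : W₁ ∈ f.invtSubmodule) (hf₂ : W₂ ∈ f.invtSubmodule)
    (hg₁ : W₁ ∈ g.invtSubmodule) (hg₂ : W₂ ∈ g.invtSubmodule) :
    f.eigenspace a ⊓ g.eigenspace b ≤
      f.eigenspace a ⊓ g.eigenspace b ⊓ W₁ ⊔ f.eigenspace a ⊓ g.eigenspace b ⊓ W₂ := by
  intro x hx
  have hx' : x ∈ W₁ ⊔ W₂ := hW.sup_eq_top ▸ Submodule.mem_top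
  obtain ⟨w₁, hw₁, w₂, hw₂, rfl⟩ := Submodule.mem_sup.1 hx'
  have hJ : w₁ ∈ f.eigenspace a ⊓ g.eigenspace b :=
    ⟨mem_eigenspace_of_add_mem hW.disjoint hf₁ hf₂ hw₁ hw₂ hx.1,
      mem_eigenspace_of_add_mem hW.disjoint hg₁ hg₂ hw₁ hw₂ hx.2⟩
  have hJ' : w₂ ∈ f.eigenspace a ⊓ g.eigenspace b := by
    simpa using sub_mem hx hJ
  exact Submodule.add_mem_sup ⟨hJ, hw₁⟩ ⟨hJ', hw₂⟩

theorem map_eigenspace_le_of_commute {f g : End K M} (h : Commute f g) (μ : K) :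
    (f.eigenspace μ).map g ≤ f.eigenspace μ :=
  Submodule.map_le_iff_le_comap.2 (mapsTo_genEigenspace_of_comm h μ 1)

theorem map_eigenspace_le_of_lie_eq_neg {H Y : End K M} (h : H * Y - Y * H = -Y) (μ : K) :
    (H.eigenspace μ).map Y ≤ H.eigenspace (μ - 1) := by
  rintro _ ⟨x, hx, rfl⟩
  rw [SetLike.mem_coe, mem_eigenspace_iff] at hx
  have := LinearMap.congr_fun h x
  simp only [LinearMap.sub_apply, mul_apply, hx, map_smul, LinearMap.neg_apply] at this
  rw [mem_eigenspace_iff, sub_smul, one_smul, sub_eq_add_neg, ← this]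
  abel

theorem eigenspace_eq_iSup_inf_eigenspace [FiniteDimensional K M] {f g : End K M}
    (hfg : Commute f g) (hg : ⨆ μ, g.eigenspace μ = ⊤) (a : K) :
    f.eigenspace a = ⨆ b, f.eigenspace a ⊓ g.eigenspace b := by
  simpa [hg] using Submodule.inf_iSup_genEigenspace (mapsTo_genEigenspace_of_comm hfg a 1) 1

theorem iSup_inf_eigenspace_eq_top [FiniteDimensional K M] {f g : End K M}
    (hfg : Commute f g) (hf : ⨆ μ, f.eigenspace μ = ⊤) (hg : ⨆ μ, g.eigenspace μ = ⊤) :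
    ⨆ p : K × K, f.eigenspace p.1 ⊓ g.eigenspace p.2 = ⊤ := by
  rw [iSup_prod, ← hf]
  exact iSup_congr fun a ↦ (eigenspace_eq_iSup_inf_eigenspace hfg hg a).symm

theorem iSupIndep_inf_eigenspace (f g : End K M) :
    iSupIndep fun p : K × K ↦ f.eigenspace p.1 ⊓ g.eigenspace p.2 := by
  have := (iSupIndep.iInf (fun b : Bool ↦ (cond b f g).eigenspace)
    fun b ↦ (cond b f g).eigenspaces_iSupIndep).comp
    (f := fun p : K × K ↦ fun b ↦ cond b p.1 p.2) fun p q h ↦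
      Prod.ext (congr_fun h true) (congr_fun h false)
  simpa [Function.comp_def, iInf_bool_eq] using this

theorem exists_inf_eigenspace_ne_bot [FiniteDimensional K M] {f g : End K M}
    (hfg : Commute f g) (hg : ⨆ μ, g.eigenspace μ = ⊤) {a : K} (ha : f.HasEigenvalue a) :
    ∃ b, f.eigenspace a ⊓ g.eigenspace b ≠ ⊥ := by
  by_contra h
  push Not at h
  exact hasEigenvalue_iff.1 ha
    ((eigenspace_eq_iSup_inf_eigenspace hfg hg a).trans (iSup_eq_bot.2 h))

theorem le_of_eigenspace_sub_ne_bot [CharZero K] {f : End K M} {c : K} {s i : ℕ}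
    (hev : ∀ μ, f.HasEigenvalue μ → ∃ i : ℕ, i ≤ s ∧ μ = c - i) (h : f.eigenspace (c - i) ≠ ⊥) :
    i ≤ s := by
  obtain ⟨i', hi', he⟩ := hev _ (hasEigenvalue_iff.2 h)
  rw [sub_right_inj, Nat.cast_inj] at he
  exact he ▸ hi'

end Module.End

structure IsWeightGrid (H₁ H₂ Y₁ Y₂ : End K M) (V : ℕ → ℕ → Submodule K M) : Prop where
  indep : iSupIndep fun p : ℕ × ℕ ↦ V p.1 p.2
  iSup_eq_top : ⨆ p : ℕ × ℕ, V p.1 p.2 = ⊤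
  finrank_le_one : ∀ i j, finrank K (V i j) ≤ 1
  eq_inf_eigenspace : ∀ i j, ∃ a b, V i j = H₁.eigenspace a ⊓ H₂.eigenspace b
  map_Y₁_le : ∀ i j, (V i j).map Y₁ ≤ V (i + 1) j
  map_Y₂_le : ∀ i j, (V i j).map Y₂ ≤ V i (j + 1)
  commute : Commute Y₁ Y₂

def IsDecomposable (fs : Set (End K M)) : Prop :=
  ∃ W₁ W₂ : Submodule K M, W₁ ≠ ⊥ ∧ W₂ ≠ ⊥ ∧ IsCompl W₁ W₂ ∧
    ∀ f ∈ fs, W₁ ∈ f.invtSubmodule ∧ W₂ ∈ f.invtSubmodule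

theorem IsWeightGrid.of_eigenspaces [CharZero K] [FiniteDimensional K M]
    {H₁ H₂ Y₁ Y₂ : End K M} (hHH : Commute H₁ H₂) (hYY : Commute Y₁ Y₂)
    (hH₁Y₂ : Commute H₁ Y₂) (hH₂Y₁ : Commute H₂ Y₁)
    (hrel₁ : H₁ * Y₁ - Y₁ * H₁ = -Y₁) (hrel₂ : H₂ * Y₂ - Y₂ * H₂ = -Y₂)
    (hdiag₁ : ⨆ μ, H₁.eigenspace μ = ⊤) (hdiag₂ : ⨆ μ, H₂.eigenspace μ = ⊤)
    (hmf : ∀ a b, finrank K ↥(H₁.eigenspace a ⊓ H₂.eigenspace b) ≤ 1) {c₁ c₂ : K}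
    (hev₁ : ∀ μ, H₁.HasEigenvalue μ → ∃ i : ℕ, μ = c₁ - i)
    (hev₂ : ∀ μ, H₂.HasEigenvalue μ → ∃ j : ℕ, μ = c₂ - j) {V : ℕ → ℕ → Submodule K M}
    (hV : ∀ i j : ℕ, V i j = H₁.eigenspace (c₁ - i) ⊓ H₂.eigenspace (c₂ - j)) :
    IsWeightGrid H₁ H₂ Y₁ Y₂ V where
  indep := by
    have hinj : Function.Injective fun p : ℕ × ℕ ↦ (c₁ - p.1, c₂ - p.2) := fun p q h ↦ by
      simp only [Prod.mk.injEq, sub_right_inj, Nat.cast_inj] at h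
      exact Prod.ext h.1 h.2
    simpa only [Function.comp_def, ← hV] using (End.iSupIndep_inf_eigenspace H₁ H₂).comp hinj
  iSup_eq_top := by
    refine top_unique ((End.iSup_inf_eigenspace_eq_top hHH hdiag₁ hdiag₂).ge.trans
      (iSup_le fun p ↦ ?_))
    by_cases hp : H₁.eigenspace p.1 ⊓ H₂.eigenspace p.2 = ⊥
    · exact hp ▸ bot_le
    obtain ⟨i, hi⟩ := hev₁ p.1 (End.hasEigenvalue_iff.2 (ne_bot_of_le_ne_bot hp inf_le_left))
    obtain ⟨j, hj⟩ := hev₂ p.2 (End.hasEigenvalue_iff.2 (ne_bot_of_le_ne_bot hp inf_le_right))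
    exact le_iSup_of_le (i, j) (by rw [hV, ← hi, ← hj])
  finrank_le_one i j := hV i j ▸ hmf _ _
  eq_inf_eigenspace i j := ⟨_, _, hV i j⟩
  map_Y₁_le i j := by
    rw [hV, hV, Nat.cast_succ, ← sub_sub]
    exact (Submodule.map_inf_le _).trans (inf_le_inf (End.map_eigenspace_le_of_lie_eq_neg hrel₁ _)
      (End.map_eigenspace_le_of_commute hH₂Y₁ _))
  map_Y₂_le i j := by
    rw [hV, hV, Nat.cast_succ, ← sub_sub]
    exact (Submodule.map_inf_le _).trans (inf_le_inf (End.map_eigenspace_le_of_commute hH₁Y₂ _)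
      (End.map_eigenspace_le_of_lie_eq_neg hrel₂ _))
  commute := hYY

namespace IsWeightGrid

variable {H₁ H₂ Y₁ Y₂ : End K M} {V : ℕ → ℕ → Submodule K M}

theorem square [FiniteDimensional K M] (hG : IsWeightGrid H₁ H₂ Y₁ Y₂ V) (i j : ℕ) :
    ((V i j).map Y₁ ≠ ⊥ ∧ (V (i + 1) j).map Y₂ ≠ ⊥) ↔
      ((V i j).map Y₂ ≠ ⊥ ∧ (V i (j + 1)).map Y₁ ≠ ⊥) := by
  rw [← Submodule.map_map_ne_bot_iff (hG.map_Y₁_le i j) (hG.finrank_le_one _ _),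
    ← Submodule.map_map_ne_bot_iff (hG.map_Y₂_le i j) (hG.finrank_le_one _ _),
    ← Submodule.map_comp, ← Submodule.map_comp, ← End.mul_eq_comp, ← End.mul_eq_comp,
    hG.commute.eq]

theorem edge_fst_lt (hG : IsWeightGrid H₁ H₂ Y₁ Y₂ V) {s : ℕ} (hs : ∀ i j, V i j ≠ ⊥ → i ≤ s)
    (i j : ℕ) (h : (V i j).map Y₁ ≠ ⊥) : i < s :=
  hs (i + 1) j (ne_bot_of_le_ne_bot h (hG.map_Y₁_le i j))

theorem edge_snd_lt (hG : IsWeightGrid H₁ H₂ Y₁ Y₂ V) {t : ℕ} (ht : ∀ i j, V i j ≠ ⊥ → j ≤ t)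
    (i j : ℕ) (h : (V i j).map Y₂ ≠ ⊥) : j < t :=
  ht i (j + 1) (ne_bot_of_le_ne_bot h (hG.map_Y₂_le i j))

theorem map_H₁_le (hG : IsWeightGrid H₁ H₂ Y₁ Y₂ V) (i j : ℕ) : (V i j).map H₁ ≤ V i j := by
  obtain ⟨a, b, h⟩ := hG.eq_inf_eigenspace i j
  exact (End.mem_invtSubmodule_iff_map_le _).1
    (End.mem_invtSubmodule_of_le_eigenspace (h ▸ inf_le_left))

theorem map_H₂_le (hG : IsWeightGrid H₁ H₂ Y₁ Y₂ V) (i j : ℕ) : (V i j).map H₂ ≤ V i j := by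
  obtain ⟨a, b, h⟩ := hG.eq_inf_eigenspace i j
  exact (End.mem_invtSubmodule_iff_map_le _).1
    (End.mem_invtSubmodule_of_le_eigenspace (h ▸ inf_le_right))

theorem le_or_le [FiniteDimensional K M] (hG : IsWeightGrid H₁ H₂ Y₁ Y₂ V)
    {W₁ W₂ : Submodule K M} (hW : IsCompl W₁ W₂)
    (h₁ : W₁ ∈ H₁.invtSubmodule ∧ W₂ ∈ H₁.invtSubmodule)
    (h₂ : W₁ ∈ H₂.invtSubmodule ∧ W₂ ∈ H₂.invtSubmodule) (i j : ℕ) :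
    V i j ≤ W₁ ∨ V i j ≤ W₂ := by
  obtain ⟨a, b, hV⟩ := hG.eq_inf_eigenspace i j
  refine Submodule.le_or_le_of_finrank_le_one (hG.finrank_le_one i j) ?_
  rw [hV]
  exact End.inf_eigenspace_le_sup_of_isCompl hW h₁.1 h₁.2 h₂.1 h₂.2

theorem eq_top_of_forall_le (hG : IsWeightGrid H₁ H₂ Y₁ Y₂ V) {W : Submodule K M}
    (h : ∀ i j, V i j ≠ ⊥ → V i j ≤ W) : W = ⊤ := by
  refine top_unique (hG.iSup_eq_top ▸ iSup_le fun p ↦ ?_)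
  by_cases hp : V p.1 p.2 = ⊥
  · exact hp ▸ bot_le
  · exact h _ _ hp

theorem not_isDecomposable [FiniteDimensional K M] (hG : IsWeightGrid H₁ H₂ Y₁ Y₂ V) {s : ℕ}
    (hs : ∀ i j, V i j ≠ ⊥ → i ≤ s)
    (hcol : ∀ i j₁ j j₂, V i j₁ ≠ ⊥ → V i j₂ ≠ ⊥ → j₁ ≤ j → j ≤ j₂ → V i j ≠ ⊥)
    (hrow : ∀ i < s, ∃ j, V i j ≠ ⊥ ∧ V (i + 1) j ≠ ⊥)
    (hY₁ : ∀ i j, V i j ≠ ⊥ → V (i + 1) j ≠ ⊥ → (V i j).map Y₁ = V (i + 1) j)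
    (hY₂ : ∀ i j, V i j ≠ ⊥ → V i (j + 1) ≠ ⊥ → (V i j).map Y₂ = V i (j + 1)) :
    ¬IsDecomposable {H₁, H₂, Y₁, Y₂} := by
  rintro ⟨W₁, W₂, hW₁, hW₂, hW, hinv⟩
  have hside := hG.le_or_le hW (hinv H₁ (by simp)) (hinv H₂ (by simp))
  have hconst : ∀ {a b c d}, V a b ≠ ⊥ → V c d ≠ ⊥ → (V a b ≤ W₁ ↔ V c d ≤ W₁) :=
    iff_of_edge_iff hs hcol hrow
      (fun i j h h' ↦ Submodule.le_iff_le_of_map_eq hW (hinv Y₁ (by simp)) (hside i j) h'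
        (hY₁ i j h h'))
      (fun i j h h' ↦ Submodule.le_iff_le_of_map_eq hW (hinv Y₂ (by simp)) (hside i j) h'
        (hY₂ i j h h'))
  by_cases h : ∃ a b, V a b ≠ ⊥ ∧ V a b ≤ W₁
  · obtain ⟨a, b, hab, hle⟩ := h
    have htop : W₁ = ⊤ := hG.eq_top_of_forall_le fun c d hcd ↦ (hconst hab hcd).1 hle
    exact hW₂ (eq_bot_of_isCompl_top (htop ▸ hW).symm)
  · push Not at h
    have htop : W₂ = ⊤ := hG.eq_top_of_forall_le fun c d hcd ↦
      (hside c d).resolve_left (h c d hcd)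
    exact hW₁ (eq_bot_of_isCompl_top (htop ▸ hW))

theorem isDecomposable_of_isCut (hG : IsWeightGrid H₁ H₂ Y₁ Y₂ V) {A : ℕ → ℕ → Prop}
    (hA : IsCut (fun i j ↦ (V i j).map Y₁ ≠ ⊥) (fun i j ↦ (V i j).map Y₂ ≠ ⊥) A)
    {a b c d : ℕ} (hab : A a b) (hab' : V a b ≠ ⊥) (hcd : ¬A c d) (hcd' : V c d ≠ ⊥) :
    IsDecomposable {H₁, H₂, Y₁, Y₂} := by
  set S : Set (ℕ × ℕ) := {p | A p.1 p.2}
  have hle : ∀ {T : Set (ℕ × ℕ)} {p : ℕ × ℕ}, p ∈ T → V p.1 p.2 ≤ ⨆ q ∈ T, V q.1 q.2 :=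
    fun h ↦ le_biSup (fun q : ℕ × ℕ ↦ V q.1 q.2) h
  have hinv : ∀ T : Set (ℕ × ℕ), (∀ p ∈ T, (p.1 + 1, p.2) ∈ T ∨ (V p.1 p.2).map Y₁ = ⊥) →
      (∀ p ∈ T, (p.1, p.2 + 1) ∈ T ∨ (V p.1 p.2).map Y₂ = ⊥) →
      ∀ f ∈ ({H₁, H₂, Y₁, Y₂} : Set (End K M)), (⨆ q ∈ T, V q.1 q.2) ∈ f.invtSubmodule := by
    intro T h₁ h₂ f hf
    refine Submodule.biSup_mem_invtSubmodule fun p hp ↦ ?_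
    simp only [Set.mem_insert_iff, Set.mem_singleton_iff] at hf
    rcases hf with rfl | rfl | rfl | rfl
    · exact (hG.map_H₁_le _ _).trans (hle hp)
    · exact (hG.map_H₂_le _ _).trans (hle hp)
    · exact (h₁ p hp).elim (fun h ↦ (hG.map_Y₁_le _ _).trans (hle h)) fun h ↦ h ▸ bot_le
    · exact (h₂ p hp).elim (fun h ↦ (hG.map_Y₂_le _ _).trans (hle h)) fun h ↦ h ▸ bot_le
  refine ⟨_, _, ne_bot_of_le_ne_bot hab' (hle (p := (a, b)) hab),
    ne_bot_of_le_ne_bot hcd' (hle (T := Sᶜ) (p := (c, d)) hcd),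
    ⟨hG.indep.disjoint_biSup_biSup disjoint_compl_right,
      codisjoint_iff.2 ((iSup_split _ (· ∈ S)).symm.trans hG.iSup_eq_top)⟩,
    fun f hf ↦ ⟨hinv S (fun p hp ↦ Or.inl (hA.succ_fst _ _ hp))
      (fun p hp ↦ Or.inl (hA.succ_snd _ _ hp)) f hf, hinv Sᶜ ?_ ?_ f hf⟩⟩
  · intro p hp
    by_cases h : A (p.1 + 1) p.2
    · exact Or.inr (not_not.1 (hA.not_edge_fst _ _ hp h))
    · exact Or.inl h
  · intro p hp
    by_cases h : A p.1 (p.2 + 1)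
    · exact Or.inr (not_not.1 (hA.not_edge_snd _ _ hp h))
    · exact Or.inl h

theorem map_Y₁_eq_of_not_isDecomposable [FiniteDimensional K M]
    (hG : IsWeightGrid H₁ H₂ Y₁ Y₂ V) {s : ℕ} (hs : ∀ i j, V i j ≠ ⊥ → i ≤ s)
    (hind : ¬IsDecomposable {H₁, H₂, Y₁, Y₂}) {i j : ℕ} (h : V i j ≠ ⊥) (h' : V (i + 1) j ≠ ⊥) :
    (V i j).map Y₁ = V (i + 1) j := by
  by_contra hne
  have hbot : ¬(V i j).map Y₁ ≠ ⊥ := fun h₀ ↦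
    hne (Submodule.eq_of_le_of_finrank_le_one (hG.map_Y₁_le i j) (hG.finrank_le_one _ _) h₀)
  obtain ⟨A, hA, hin, hout⟩ := exists_isCut_of_not_edge_fst (E₂ := fun i j ↦ (V i j).map Y₂ ≠ ⊥)
    hG.square (hG.edge_fst_lt hs) hbot
  exact hind (hG.isDecomposable_of_isCut hA hin h' hout h)

theorem map_Y₂_eq_of_not_isDecomposable [FiniteDimensional K M]
    (hG : IsWeightGrid H₁ H₂ Y₁ Y₂ V) {t : ℕ} (ht : ∀ i j, V i j ≠ ⊥ → j ≤ t)
    (hind : ¬IsDecomposable {H₁, H₂, Y₁, Y₂}) {i j : ℕ} (h : V i j ≠ ⊥) (h' : V i (j + 1) ≠ ⊥) :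
    (V i j).map Y₂ = V i (j + 1) := by
  by_contra hne
  have hbot : ¬(V i j).map Y₂ ≠ ⊥ := fun h₀ ↦
    hne (Submodule.eq_of_le_of_finrank_le_one (hG.map_Y₂_le i j) (hG.finrank_le_one _ _) h₀)
  obtain ⟨A, hA, hin, hout⟩ := exists_isCut_of_not_edge_snd (E₁ := fun i j ↦ (V i j).map Y₁ ≠ ⊥)
    hG.square (hG.edge_snd_lt ht) hbot
  exact hind (hG.isDecomposable_of_isCut hA hin h' hout h)

theorem ne_bot_of_le_fst_of_not_isDecomposable [FiniteDimensional K M]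
    (hG : IsWeightGrid H₁ H₂ Y₁ Y₂ V) {s : ℕ} (hs : ∀ i j, V i j ≠ ⊥ → i ≤ s)
    (hind : ¬IsDecomposable {H₁, H₂, Y₁, Y₂}) {i₁ i i₂ j : ℕ} (h₁ : V i₁ j ≠ ⊥)
    (h₂ : V i₂ j ≠ ⊥) (hi₁ : i₁ ≤ i) (hi₂ : i ≤ i₂) : V i j ≠ ⊥ := by
  intro h₀
  obtain ⟨A, hA, hin, hout⟩ := exists_isCut_of_not_edge_fst (E₂ := fun i j ↦ (V i j).map Y₂ ≠ ⊥)
    hG.square (hG.edge_fst_lt hs) (i₀ := i) (j₀ := j) (by simp [h₀])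
  have hi : i + 1 ≤ i₂ := Nat.lt_of_le_of_ne hi₂ fun hi ↦ h₂ (hi ▸ h₀)
  exact hind (hG.isDecomposable_of_isCut hA (hA.mono hin hi le_rfl) h₂
    (fun h ↦ hout (hA.mono h hi₁ le_rfl)) h₁)

theorem ne_bot_of_le_snd_of_not_isDecomposable [FiniteDimensional K M]
    (hG : IsWeightGrid H₁ H₂ Y₁ Y₂ V) {t : ℕ} (ht : ∀ i j, V i j ≠ ⊥ → j ≤ t)
    (hind : ¬IsDecomposable {H₁, H₂, Y₁, Y₂}) {i j₁ j j₂ : ℕ} (h₁ : V i j₁ ≠ ⊥)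
    (h₂ : V i j₂ ≠ ⊥) (hj₁ : j₁ ≤ j) (hj₂ : j ≤ j₂) : V i j ≠ ⊥ := by
  intro h₀
  obtain ⟨A, hA, hin, hout⟩ := exists_isCut_of_not_edge_snd (E₁ := fun i j ↦ (V i j).map Y₁ ≠ ⊥)
    hG.square (hG.edge_snd_lt ht) (i₀ := i) (j₀ := j) (by simp [h₀])
  have hj : j + 1 ≤ j₂ := Nat.lt_of_le_of_ne hj₂ fun hj ↦ h₂ (hj ▸ h₀)
  exact hind (hG.isDecomposable_of_isCut hA (hA.mono hin le_rfl hj) h₂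
    (fun h ↦ hout (hA.mono h le_rfl hj₁)) h₁)

theorem exists_ne_bot_of_not_isDecomposable (hG : IsWeightGrid H₁ H₂ Y₁ Y₂ V) {s : ℕ}
    (hcol : ∀ i ≤ s, ∃ j, V i j ≠ ⊥) (hind : ¬IsDecomposable {H₁, H₂, Y₁, Y₂}) {i : ℕ}
    (hi : i < s) : ∃ j, V i j ≠ ⊥ ∧ V (i + 1) j ≠ ⊥ := by
  by_contra h
  push Not at h
  have hA : IsCut (fun i j ↦ (V i j).map Y₁ ≠ ⊥) (fun i j ↦ (V i j).map Y₂ ≠ ⊥)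
      (fun a _ ↦ i < a) :=
    ⟨fun _ _ h ↦ Nat.lt_succ_of_lt h, fun _ _ ↦ id, fun a b ha ha' hE ↦ ?_,
      fun _ _ ha ha' ↦ absurd ha' ha⟩
  · obtain ⟨j, hj⟩ := hcol i hi.le
    obtain ⟨j', hj'⟩ := hcol (i + 1) hi
    exact hind (hG.isDecomposable_of_isCut hA (lt_add_one i) hj' (lt_irrefl i) hj)
  · obtain rfl : a = i := by omega
    exact ne_bot_of_le_ne_bot hE (hG.map_Y₁_le a b) (h b fun h₀ ↦ hE (by simp [h₀]))

end IsWeightGrid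

end LinearAlgebra

theorem isDecomposable_iff_exists_invariantB2 {r : ℕ} {H₁ H₂ Y₁ Y₂ : Module.End ℂ (Fin r → ℂ)} :
    IsDecomposable {H₁, H₂, Y₁, Y₂} ↔ ∃ W₁ W₂ : Submodule ℂ (Fin r → ℂ), W₁ ≠ ⊥ ∧ W₂ ≠ ⊥ ∧
      IsCompl W₁ W₂ ∧ InvariantB2 H₁ H₂ Y₁ Y₂ W₁ ∧ InvariantB2 H₁ H₂ Y₁ Y₂ W₂ := by
  simp only [IsDecomposable, InvariantB2, Set.forall_mem_insert, Set.mem_singleton_iff, forall_eq,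
    End.mem_invtSubmodule_iff_forall_mem_of_mem]
  exact exists₂_congr fun _ _ ↦ by tauto

/-- A multiplicity-free representation of `𝔟²` with eigenvalue strings
`λ₁, …, λ₁ − s` and `λ₂, …, λ₂ − t` is indecomposable iff conditions P1–P4 hold.
Here `V (i, j)` is the joint eigenspace for the joint eigenvalue `(λ₁ − i, λ₂ − j)` and
`(i,j) ∈ S` is encoded by `V (i, j) ≠ ⊥`. -/
theorem statement5 {r : ℕ} (H₁ H₂ Y₁ Y₂ : Module.End ℂ (Fin r → ℂ))
    (hHH : Commute H₁ H₂) (hYY : Commute Y₁ Y₂)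
    (hH₁Y₂ : Commute H₁ Y₂) (hH₂Y₁ : Commute H₂ Y₁)
    (hrel₁ : H₁ * Y₁ - Y₁ * H₁ = -Y₁) (hrel₂ : H₂ * Y₂ - Y₂ * H₂ = -Y₂)
    (hdiag₁ : (⨆ μ : ℂ, Module.End.eigenspace H₁ μ) = ⊤)
    (hdiag₂ : (⨆ μ : ℂ, Module.End.eigenspace H₂ μ) = ⊤)
    (hmf : ∀ a b : ℂ, Module.finrank ℂ
      ↥(Module.End.eigenspace H₁ a ⊓ Module.End.eigenspace H₂ b) ≤ 1)
    (lam₁ lam₂ : ℝ) (s t : ℕ)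
    (hev₁ : ∀ μ : ℂ, Module.End.HasEigenvalue H₁ μ ↔ ∃ i : ℕ, i ≤ s ∧ μ = (lam₁ : ℂ) - i)
    (hev₂ : ∀ μ : ℂ, Module.End.HasEigenvalue H₂ μ ↔ ∃ j : ℕ, j ≤ t ∧ μ = (lam₂ : ℂ) - j)
    (V : ℕ → ℕ → Submodule ℂ (Fin r → ℂ))
    (hV : ∀ i j : ℕ, V i j =
      Module.End.eigenspace H₁ ((lam₁ : ℂ) - i) ⊓ Module.End.eigenspace H₂ ((lam₂ : ℂ) - j)) :
    (¬ ∃ W₁ W₂ : Submodule ℂ (Fin r → ℂ), W₁ ≠ ⊥ ∧ W₂ ≠ ⊥ ∧ IsCompl W₁ W₂ ∧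
        InvariantB2 H₁ H₂ Y₁ Y₂ W₁ ∧ InvariantB2 H₁ H₂ Y₁ Y₂ W₂) ↔
      ((∀ i j₁ j j₂ : ℕ, V i j₁ ≠ ⊥ → V i j₂ ≠ ⊥ → j₁ ≤ j → j ≤ j₂ → V i j ≠ ⊥) ∧
       (∀ i₁ i i₂ j : ℕ, V i₁ j ≠ ⊥ → V i₂ j ≠ ⊥ → i₁ ≤ i → i ≤ i₂ → V i j ≠ ⊥) ∧
       (∀ i : ℕ, i < s → ∃ j : ℕ, V i j ≠ ⊥ ∧ V (i + 1) j ≠ ⊥) ∧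
       ((∀ i j : ℕ, V i j ≠ ⊥ → V (i + 1) j ≠ ⊥ → Submodule.map Y₁ (V i j) = V (i + 1) j) ∧
        (∀ i j : ℕ, V i j ≠ ⊥ → V i (j + 1) ≠ ⊥ → Submodule.map Y₂ (V i j) = V i (j + 1)))) := by
  have hG : IsWeightGrid H₁ H₂ Y₁ Y₂ V := .of_eigenspaces hHH hYY hH₁Y₂ hH₂Y₁ hrel₁ hrel₂
    hdiag₁ hdiag₂ hmf (fun μ h ↦ ((hev₁ μ).1 h).imp fun _ ↦ And.right)
    (fun μ h ↦ ((hev₂ μ).1 h).imp fun _ ↦ And.right) hV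
  have hs : ∀ i j, V i j ≠ ⊥ → i ≤ s := fun i j h ↦ Module.End.le_of_eigenspace_sub_ne_bot
    (fun μ ↦ (hev₁ μ).1) (ne_bot_of_le_ne_bot h (hV i j ▸ inf_le_left))
  have ht : ∀ i j, V i j ≠ ⊥ → j ≤ t := fun i j h ↦ Module.End.le_of_eigenspace_sub_ne_bot
    (fun μ ↦ (hev₂ μ).1) (ne_bot_of_le_ne_bot h (hV i j ▸ inf_le_right))
  have hcol : ∀ i ≤ s, ∃ j, V i j ≠ ⊥ := fun i hi ↦ by
    obtain ⟨b, hb⟩ := Module.End.exists_inf_eigenspace_ne_bot hHH hdiag₂ ((hev₁ _).2 ⟨i, hi, rfl⟩)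
    obtain ⟨j, -, rfl⟩ := (hev₂ b).1
      (Module.End.hasEigenvalue_iff.2 (ne_bot_of_le_ne_bot hb inf_le_right))
    exact ⟨j, hV i j ▸ hb⟩
  rw [← isDecomposable_iff_exists_invariantB2]
  refine ⟨fun hind ↦ ⟨fun _ _ _ _ ↦ hG.ne_bot_of_le_snd_of_not_isDecomposable ht hind,
    fun _ _ _ _ ↦ hG.ne_bot_of_le_fst_of_not_isDecomposable hs hind,
    fun _ ↦ hG.exists_ne_bot_of_not_isDecomposable hcol hind,
    fun _ _ ↦ hG.map_Y₁_eq_of_not_isDecomposable hs hind,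
    fun _ _ ↦ hG.map_Y₂_eq_of_not_isDecomposable ht hind⟩, ?_⟩
  rintro ⟨hP₁, -, hP₃, hP₄₁, hP₄₂⟩
  exact hG.not_isDecomposable hs hP₁ hP₃ hP₄₁ hP₄₂
end

section
/- Let n ≥ 1 and let H₁,…,Hₙ, Y₁,…,Yₙ be an indecomposable representation of 𝔟ⁿ on ℂ², with each H_i diagonalizable. Then there exists an index i₀ ∈ {1,…,n} such that the pair (H_{i₀}, Y_{i₀}) is an indecomposable representation of 𝔟 on ℂ² (i.e., ℂ² is not the direct sum of two nonzero subspaces invariant under both H_{i₀} and Y_{i₀}), and for every j ≠ i₀ there is a scalar α_j ∈ ℂ with H_j = α_j·I₂ and Y_j = 0. -/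
/-!
If some `Y i₀ ≠ 0`, the relation `[H i₀, Y i₀] = -Y i₀` makes `Y i₀` lower eigenvalues of
`H i₀` by one; diagonalizability gives an eigenvector `v` with `Y i₀ v ≠ 0`, so `v` and
`Y i₀ v` are eigenvectors of `H i₀` with distinct eigenvalues and span `ℂ²`. For `j ≠ i₀`,
`H j` commutes with `H i₀`, so `v` is an eigenvector of `H j`, and commutes with `Y i₀`, so
`Y i₀ v` is one with the same eigenvalue: `H j` is a scalar, whence `Y j = -[H j, Y j] = 0`.
If all `Y i` vanish, the `H i` commute and are diagonalizable, so the two eigenlines of a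
non-scalar one (or any splitting, if all are scalar) decompose `ℂ²`.
-/

open Module Set

/-- A subspace invariant under both operators of a single pair `(T, S)`. -/
def InvariantPair {r : ℕ} (T S : Module.End ℂ (Fin r → ℂ))
    (W : Submodule ℂ (Fin r → ℂ)) : Prop :=
  (∀ x ∈ W, T x ∈ W) ∧ (∀ x ∈ W, S x ∈ W)

theorem Submodule.exists_isCompl_ne_bot_of_one_lt_finrank {K V : Type*} [DivisionRing K]
    [AddCommGroup V] [Module K V] (hV : 1 < finrank K V) :
    ∃ W₁ W₂ : Submodule K V, W₁ ≠ ⊥ ∧ W₂ ≠ ⊥ ∧ IsCompl W₁ W₂ := by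
  have := Module.finite_of_finrank_pos (zero_lt_one.trans hV)
  obtain ⟨v, hv⟩ := (Module.finrank_pos_iff_exists_ne_zero (R := K)).1 (zero_lt_one.trans hV)
  obtain ⟨W, hW⟩ := Submodule.exists_isCompl (K ∙ v)
  have hrank := Submodule.finrank_add_eq_of_isCompl hW
  rw [finrank_span_singleton hv] at hrank
  refine ⟨K ∙ v, W, by simpa using hv, fun h => ?_, hW⟩
  rw [h, finrank_bot] at hrank
  omega

theorem Submodule.mapsTo_smul_one {R M : Type*} [CommSemiring R] [AddCommMonoid M] [Module R M]
    (W : Submodule R M) (c : R) : MapsTo (c • 1 : Module.End R M) W W :=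
  fun x hx => by simpa using W.smul_mem c hx

namespace Module.End

section CommRing

variable {R M : Type*} [CommRing R] [AddCommGroup M] [Module R M] {f : End R M}

theorem exists_hasEigenvalue_ne (hdiag : ⨆ μ, f.eigenspace μ = ⊤) (hf : ∀ c : R, f ≠ c • 1) :
    ∃ μ ν, μ ≠ ν ∧ f.HasEigenvalue μ ∧ f.HasEigenvalue ν := by
  have hne_top : ∀ μ, f.eigenspace μ ≠ ⊤ := fun μ h =>
    hf μ (by rwa [eigenspace_def, LinearMap.ker_eq_top, sub_eq_zero] at h)
  obtain ⟨μ, hμ⟩ : ∃ μ, f.HasEigenvalue μ := by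
    -- with no eigenvalue at all, `M = 0` and `f = 0 • 1`
    by_contra! h
    refine hne_top 0 (top_le_iff.1 (hdiag ▸ iSup_le fun μ => ?_))
    exact (not_not.1 (h μ) : f.eigenspace μ = ⊥).trans_le bot_le
  obtain ⟨ν, hνμ, hν⟩ : ∃ ν, ν ≠ μ ∧ f.HasEigenvalue ν := by
    by_contra! h
    refine hne_top μ (top_le_iff.1 (hdiag ▸ iSup_le fun ν => ?_))
    rcases eq_or_ne ν μ with rfl | hνμ
    · exact le_rfl
    · exact (not_not.1 (h ν hνμ) : f.eigenspace ν = ⊥).trans_le bot_le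
  exact ⟨μ, ν, hνμ.symm, hμ, hν⟩

theorem exists_mem_eigenspace_apply_ne_zero (hdiag : ⨆ μ, f.eigenspace μ = ⊤) {g : End R M}
    (hg : g ≠ 0) : ∃ μ, ∃ x ∈ f.eigenspace μ, g x ≠ 0 := by
  by_contra! h
  exact hg (LinearMap.ker_eq_top.1 (top_le_iff.1 (hdiag ▸ iSup_le fun μ x hx => h μ x hx)))

theorem apply_mem_eigenspace_sub_one_s6 {h y : End R M} (hrel : h * y - y * h = -y) {μ : R}
    {x : M} (hx : x ∈ h.eigenspace μ) : y x ∈ h.eigenspace (μ - 1) := by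
  rw [mem_eigenspace_iff] at hx ⊢
  have hrelx := LinearMap.congr_fun hrel x
  simp only [LinearMap.sub_apply, mul_apply, LinearMap.neg_apply, hx, map_smul] at hrelx
  linear_combination (norm := module) hrelx

end CommRing

section FinrankTwo

variable {K V : Type*} [Field K] [AddCommGroup V] [Module K V] {f : End K V} {μ ν : K}

theorem finrank_eigenspace_eq_one (hV : finrank K V = 2) (hμν : μ ≠ ν)
    (hμ : f.HasEigenvalue μ) (hν : f.HasEigenvalue ν) : finrank K (f.eigenspace μ) = 1 := by
  have := Module.finite_of_finrank_eq_succ hV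
  have hsum : finrank K (f.eigenspace μ) + finrank K (f.eigenspace ν) ≤ finrank K V :=
    Submodule.finrank_add_finrank_le_of_disjoint (f.disjoint_genEigenspace hμν 1 1)
  have hμ' : 1 ≤ finrank K (f.eigenspace μ) := Submodule.one_le_finrank_iff.2 hμ
  have hν' : 1 ≤ finrank K (f.eigenspace ν) := Submodule.one_le_finrank_iff.2 hν
  omega

theorem isCompl_eigenspace (hV : finrank K V = 2) (hμν : μ ≠ ν)
    (hμ : f.HasEigenvalue μ) (hν : f.HasEigenvalue ν) :
    IsCompl (f.eigenspace μ) (f.eigenspace ν) := by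
  have := Module.finite_of_finrank_eq_succ hV
  have hdisj := f.disjoint_genEigenspace hμν 1 1
  refine ⟨hdisj, codisjoint_iff.2 <| Submodule.eq_top_of_disjoint _ _ ?_ hdisj⟩
  rw [hV, finrank_eigenspace_eq_one hV hμν hμ hν, finrank_eigenspace_eq_one hV hμν.symm hν hμ]

theorem eigenspace_eq_span_singleton (hV : finrank K V = 2) (hμν : μ ≠ ν) {v : V}
    (hv : f.HasEigenvector μ v) (hν : f.HasEigenvalue ν) : f.eigenspace μ = K ∙ v := by
  have := Module.finite_of_finrank_eq_succ hV
  refine (Submodule.eq_of_le_of_finrank_eq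
    ((Submodule.span_singleton_le_iff_mem _ _).2 hv.1) ?_).symm
  rw [finrank_span_singleton hv.2,
    finrank_eigenspace_eq_one hV hμν (hasEigenvalue_of_hasEigenvector hv) hν]

theorem HasEigenvector.exists_apply_eq_smul_of_commute (hV : finrank K V = 2) (hμν : μ ≠ ν)
    {v : V} (hv : f.HasEigenvector μ v) (hν : f.HasEigenvalue ν) {g : End K V}
    (hfg : Commute f g) : ∃ c : K, g v = c • v := by
  have hgv : g v ∈ K ∙ v :=
    eigenspace_eq_span_singleton hV hμν hv hν ▸ mapsTo_genEigenspace_of_comm hfg μ 1 hv.1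
  obtain ⟨c, hc⟩ := Submodule.mem_span_singleton.1 hgv
  exact ⟨c, hc.symm⟩

theorem exists_isCompl_forall_mapsTo {ι : Type*} (hV : finrank K V = 2) {f : ι → End K V}
    (hcomm : ∀ i j, Commute (f i) (f j)) (hdiag : ∀ i, ⨆ μ, (f i).eigenspace μ = ⊤) :
    ∃ W₁ W₂ : Submodule K V, W₁ ≠ ⊥ ∧ W₂ ≠ ⊥ ∧ IsCompl W₁ W₂ ∧
      ∀ i, MapsTo (f i) W₁ W₁ ∧ MapsTo (f i) W₂ W₂ := by
  by_cases hscalar : ∀ i, ∃ c : K, f i = c • 1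
  · obtain ⟨W₁, W₂, h₁, h₂, hc⟩ :=
      Submodule.exists_isCompl_ne_bot_of_one_lt_finrank (hV ▸ one_lt_two)
    refine ⟨W₁, W₂, h₁, h₂, hc, fun i => ?_⟩
    obtain ⟨c, hfi⟩ := hscalar i
    exact hfi ▸ ⟨W₁.mapsTo_smul_one c, W₂.mapsTo_smul_one c⟩
  · push Not at hscalar
    obtain ⟨i, hi⟩ := hscalar
    obtain ⟨μ, ν, hμν, hμ, hν⟩ := exists_hasEigenvalue_ne (hdiag i) hi
    exact ⟨_, _, hμ, hν, isCompl_eigenspace hV hμν hμ hν, fun j =>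
      ⟨mapsTo_genEigenspace_of_comm (hcomm i j) μ 1, mapsTo_genEigenspace_of_comm (hcomm i j) ν 1⟩⟩

theorem exists_eq_smul_one_of_commute (hV : finrank K V = 2) {h y g : End K V}
    (hrel : h * y - y * h = -y) (hdiag : ⨆ μ, h.eigenspace μ = ⊤) (hy : y ≠ 0)
    (hhg : Commute h g) (hgy : Commute g y) : ∃ c : K, g = c • 1 := by
  obtain ⟨μ, v, hv, hyv⟩ := exists_mem_eigenspace_apply_ne_zero hdiag hy
  have hv' : h.HasEigenvector μ v := ⟨hv, by rintro rfl; simp at hyv⟩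
  have hyv' : h.HasEigenvector (μ - 1) (y v) := ⟨apply_mem_eigenspace_sub_one_s6 hrel hv, hyv⟩
  have hμ : μ ≠ μ - 1 := (pred_ne_self μ).symm
  have hμ' := hasEigenvalue_of_hasEigenvector hv'
  have hμ₁ := hasEigenvalue_of_hasEigenvector hyv'
  have hspan : Submodule.span K {v, y v} = ⊤ := by
    rw [Submodule.span_insert, ← eigenspace_eq_span_singleton hV hμ hv' hμ₁,
      ← eigenspace_eq_span_singleton hV hμ.symm hyv' hμ']
    exact (isCompl_eigenspace hV hμ hμ' hμ₁).codisjoint.eq_top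
  obtain ⟨c, hc⟩ := hv'.exists_apply_eq_smul_of_commute hV hμ hμ₁ hhg
  refine ⟨c, LinearMap.ext_on hspan ?_⟩
  rintro x (rfl | rfl)
  · simpa using hc
  · simpa [hc] using LinearMap.congr_fun hgy.eq v

end FinrankTwo

end Module.End

open Module.End

theorem invariantPair_smul_one_zero {r : ℕ} (c : ℂ) (W : Submodule ℂ (Fin r → ℂ)) :
    InvariantPair (c • 1) 0 W :=
  ⟨fun _ hx => W.mapsTo_smul_one c hx, fun _ _ => by simp⟩

theorem statement6_general {n : ℕ} (H Y : Fin n → Module.End ℂ (Fin 2 → ℂ))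
    (hHH : ∀ i j, Commute (H i) (H j))
    (hHY : ∀ i j, i ≠ j → Commute (H i) (Y j))
    (hrel : ∀ i, H i * Y i - Y i * H i = -(Y i))
    (hdiag : ∀ i, (⨆ μ : ℂ, Module.End.eigenspace (H i) μ) = ⊤)
    (hindec : ¬ ∃ W₁ W₂ : Submodule ℂ (Fin 2 → ℂ), W₁ ≠ ⊥ ∧ W₂ ≠ ⊥ ∧ IsCompl W₁ W₂ ∧
      (∀ i, InvariantPair (H i) (Y i) W₁) ∧ (∀ i, InvariantPair (H i) (Y i) W₂)) :
    ∃ i₀ : Fin n,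
      (¬ ∃ W₁ W₂ : Submodule ℂ (Fin 2 → ℂ), W₁ ≠ ⊥ ∧ W₂ ≠ ⊥ ∧ IsCompl W₁ W₂ ∧
        InvariantPair (H i₀) (Y i₀) W₁ ∧ InvariantPair (H i₀) (Y i₀) W₂) ∧
      ∀ j : Fin n, j ≠ i₀ →
        ∃ α : ℂ, H j = α • (1 : Module.End ℂ (Fin 2 → ℂ)) ∧ Y j = 0 := by
  have hV : finrank ℂ (Fin 2 → ℂ) = 2 := by simp
  obtain ⟨i₀, hY⟩ : ∃ i₀, Y i₀ ≠ 0 := by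
    by_contra! hY
    obtain ⟨W₁, W₂, h₁, h₂, hc, hW⟩ := exists_isCompl_forall_mapsTo hV hHH hdiag
    exact hindec ⟨W₁, W₂, h₁, h₂, hc, fun i => ⟨fun _ hx => (hW i).1 hx, by simp [hY i]⟩,
      fun i => ⟨fun _ hx => (hW i).2 hx, by simp [hY i]⟩⟩
  have hscalar : ∀ j, j ≠ i₀ → ∃ α : ℂ, H j = α • 1 ∧ Y j = 0 := by
    intro j hj
    obtain ⟨α, hα⟩ :=
      exists_eq_smul_one_of_commute hV (hrel i₀) (hdiag i₀) hY (hHH i₀ j) (hHY j i₀ hj)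
    exact ⟨α, hα, by simpa [hα] using (hrel j).symm⟩
  refine ⟨i₀, ?_, hscalar⟩
  rintro ⟨W₁, W₂, h₁, h₂, hc, hW₁, hW₂⟩
  have hinv : ∀ W i, InvariantPair (H i₀) (Y i₀) W → InvariantPair (H i) (Y i) W := by
    intro W i hW
    rcases eq_or_ne i i₀ with rfl | hi
    · exact hW
    · obtain ⟨α, hα, hYi⟩ := hscalar i hi
      exact hα ▸ hYi ▸ invariantPair_smul_one_zero α W
  exact hindec ⟨W₁, W₂, h₁, h₂, hc, fun i => hinv W₁ i hW₁, fun i => hinv W₂ i hW₂⟩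

/-- A two-dimensional indecomposable representation of `𝔟ⁿ`, with each
`H_i` diagonalizable, restricts to an indecomposable representation of `𝔟` at some index
`i₀`, and is scalar (resp. zero) at every other index. -/
theorem statement6 {n : ℕ} (hn : 1 ≤ n) (H Y : Fin n → Module.End ℂ (Fin 2 → ℂ))
    (hHH : ∀ i j, Commute (H i) (H j)) (hYY : ∀ i j, Commute (Y i) (Y j))
    (hHY : ∀ i j, i ≠ j → Commute (H i) (Y j))
    (hrel : ∀ i, H i * Y i - Y i * H i = -(Y i))
    (hdiag : ∀ i, (⨆ μ : ℂ, Module.End.eigenspace (H i) μ) = ⊤)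
    (hindec : ¬ ∃ W₁ W₂ : Submodule ℂ (Fin 2 → ℂ), W₁ ≠ ⊥ ∧ W₂ ≠ ⊥ ∧ IsCompl W₁ W₂ ∧
      (∀ i, InvariantPair (H i) (Y i) W₁) ∧ (∀ i, InvariantPair (H i) (Y i) W₂)) :
    ∃ i₀ : Fin n,
      (¬ ∃ W₁ W₂ : Submodule ℂ (Fin 2 → ℂ), W₁ ≠ ⊥ ∧ W₂ ≠ ⊥ ∧ IsCompl W₁ W₂ ∧
        InvariantPair (H i₀) (Y i₀) W₁ ∧ InvariantPair (H i₀) (Y i₀) W₂) ∧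
      ∀ j : Fin n, j ≠ i₀ →
        ∃ α : ℂ, H j = α • (1 : Module.End ℂ (Fin 2 → ℂ)) ∧ Y j = 0 :=
  statement6_general H Y hHH hHY hrel hdiag hindec
end

section
/- Let 1 ≤ k ≤ n and let H₁,…,Hₙ, Y₁,…,Yₙ be a representation of 𝔟ⁿ on ℂ^r with each H_i diagonalizable. Suppose the restriction to the first k factors is multiplicity-free, i.e., every joint eigenspace {v ∈ ℂ^r : H_i v = θ_i v for 1 ≤ i ≤ k} is at most one-dimensional. Then the representation of 𝔟ⁿ is indecomposable if and only if the restricted representation of 𝔟^k given by H₁,…,H_k, Y₁,…,Y_k on ℂ^r is indecomposable (i.e., ℂ^r is not the direct sum of two nonzero subspaces invariant under H₁,…,H_k, Y₁,…,Y_k). -/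
/-!
Let `P` be the projection onto `W₁` along `W₂` for a decomposition invariant under the first
`k` factors. `P` commutes with `H₁, …, H_k`, hence preserves their joint eigenspaces; these span
`ℂʳ` (the `H_i` commute and are diagonalizable) and are at most one-dimensional, so `P` acts on
each of them by a scalar. The same holds for every `H_j` and for every `Y_j` with `j > k`, since
these also commute with `H₁, …, H_k`. Hence they all commute with `P`, i.e. preserve `W₁` and `W₂`.
-/

open Module Module.End

/-- Decomposability of a representation of `𝔟ⁿ` relative to the set `s` of indices:
`ℂʳ` splits as a direct sum of two nonzero subspaces invariant under `H i, Y i` for all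
`i ∈ s`. -/
def DecomposableOn {n r : ℕ} (H Y : Fin n → Module.End ℂ (Fin r → ℂ))
    (s : Set (Fin n)) : Prop :=
  ∃ W₁ W₂ : Submodule ℂ (Fin r → ℂ), W₁ ≠ ⊥ ∧ W₂ ≠ ⊥ ∧ IsCompl W₁ W₂ ∧
    (∀ i ∈ s, (∀ x ∈ W₁, H i x ∈ W₁) ∧ (∀ x ∈ W₁, Y i x ∈ W₁)) ∧
    (∀ i ∈ s, (∀ x ∈ W₂, H i x ∈ W₂) ∧ (∀ x ∈ W₂, Y i x ∈ W₂))

namespace Submodule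

variable {R M : Type*} [Ring R] [AddCommGroup M] [Module R M]

theorem commute_projection_iff {p q : Submodule R M} (hpq : IsCompl p q) (T : End R M) :
    Commute (p.projection q hpq) T ↔ p ∈ T.invtSubmodule ∧ q ∈ T.invtSubmodule := by
  rw [LinearMap.IsIdempotentElem.commute_iff (isIdempotentElem_projection hpq), range_projection,
    ker_projection]

end Submodule

namespace Module.End

variable {K V ι : Type*} [Field K] [AddCommGroup V] [Module K V]

theorem eigenspace_eq_maxGenEigenspace_of_iSup_eigenspace_eq_top {f : End K V}
    (hf : ⨆ μ, f.eigenspace μ = ⊤) (μ : K) : f.eigenspace μ = f.maxGenEigenspace μ :=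
  congrFun ((f.independent_maxGenEigenspace.le_iff_eq_of_iSup_eq_top hf).mp
    fun _ => eigenspace_le_maxGenEigenspace) μ

theorem iSup_iInf_eigenspace_eq_top_of_iSup_eigenspace_eq_top_of_commute [FiniteDimensional K V]
    (f : ι → End K V) (h : Pairwise fun i j ↦ Commute (f i) (f j))
    (h' : ∀ i, ⨆ μ, (f i).eigenspace μ = ⊤) :
    ⨆ χ : ι → K, ⨅ i, (f i).eigenspace (χ i) = ⊤ := by
  simp_rw [fun i => eigenspace_eq_maxGenEigenspace_of_iSup_eigenspace_eq_top (h' i)] at h' ⊢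
  exact iSup_iInf_maxGenEigenspace_eq_top_of_iSup_maxGenEigenspace_eq_top_of_commute f h h'

theorem mapsTo_iInf_eigenspace_of_forall_commute {f : ι → End K V} {g : End K V}
    (h : ∀ i, Commute (f i) g) (χ : ι → K) :
    Set.MapsTo g ↑(⨅ i, (f i).eigenspace (χ i)) ↑(⨅ i, (f i).eigenspace (χ i)) :=
  fun _ hv => Submodule.mem_iInf _ |>.mpr fun i =>
    mapsTo_genEigenspace_of_comm (h i) (χ i) 1 (Submodule.mem_iInf _ |>.mp hv i)

theorem apply_apply_comm_of_mapsTo_of_finrank_le_one [FiniteDimensional K V] {W : Submodule K V}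
    (hW : finrank K W ≤ 1) {A B : End K V} (hA : Set.MapsTo A W W) (hB : Set.MapsTo B W W)
    {v : V} (hv : v ∈ W) : A (B v) = B (A v) := by
  rcases eq_or_ne v 0 with rfl | hv0
  · simp
  have hWv : K ∙ v = W := Submodule.eq_of_le_of_finrank_le
    (Submodule.span_le.mpr (Set.singleton_subset_iff.mpr hv))
    (by rwa [finrank_span_singleton hv0])
  obtain ⟨a, ha⟩ := Submodule.mem_span_singleton.mp (hWv ▸ hA hv)
  obtain ⟨b, hb⟩ := Submodule.mem_span_singleton.mp (hWv ▸ hB hv)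
  rw [← ha, ← hb, map_smul, map_smul, ← ha, ← hb, smul_comm]

theorem commute_of_finrank_iInf_eigenspace_le_one [FiniteDimensional K V] {f : ι → End K V}
    (hspan : ⨆ χ : ι → K, ⨅ i, (f i).eigenspace (χ i) = ⊤)
    (hmf : ∀ χ : ι → K, finrank K ↥(⨅ i, (f i).eigenspace (χ i)) ≤ 1)
    {A B : End K V} (hA : ∀ i, Commute (f i) A) (hB : ∀ i, Commute (f i) B) : Commute A B := by
  suffices ⨆ χ : ι → K, ⨅ i, (f i).eigenspace (χ i) ≤ LinearMap.ker (A * B - B * A) by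
    rwa [hspan, top_le_iff, LinearMap.ker_eq_top, sub_eq_zero] at this
  refine iSup_le fun χ v hv => ?_
  simp [apply_apply_comm_of_mapsTo_of_finrank_le_one (hmf χ)
    (mapsTo_iInf_eigenspace_of_forall_commute hA χ)
    (mapsTo_iInf_eigenspace_of_forall_commute hB χ) hv]

end Module.End

theorem DecomposableOn.mono {n r : ℕ} {H Y : Fin n → End ℂ (Fin r → ℂ)} {s t : Set (Fin n)}
    (h : DecomposableOn H Y s) (hts : t ⊆ s) : DecomposableOn H Y t :=
  let ⟨W₁, W₂, h1, h2, hc, hi1, hi2⟩ := h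
  ⟨W₁, W₂, h1, h2, hc, fun i hi => hi1 i (hts hi), fun i hi => hi2 i (hts hi)⟩

theorem statement7_general {n r k : ℕ}
    (H Y : Fin n → Module.End ℂ (Fin r → ℂ))
    (hHH : ∀ i j, Commute (H i) (H j))
    (hHY : ∀ i j, i ≠ j → Commute (H i) (Y j))
    (hdiag : ∀ i, (⨆ μ : ℂ, Module.End.eigenspace (H i) μ) = ⊤)
    (hmf : ∀ θ : Fin n → ℂ, Module.finrank ℂ
      ↥(⨅ (i : Fin n) (_ : (i : ℕ) < k), Module.End.eigenspace (H i) (θ i)) ≤ 1) :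
    (¬ DecomposableOn H Y Set.univ) ↔
      (¬ DecomposableOn H Y {i : Fin n | (i : ℕ) < k}) := by
  let f : {i : Fin n // (i : ℕ) < k} → End ℂ (Fin r → ℂ) := fun i => H i
  have hspan := iSup_iInf_eigenspace_eq_top_of_iSup_eigenspace_eq_top_of_commute f
    (fun i j _ => hHH i j) (fun i => hdiag i)
  have hmf' (χ : {i : Fin n // (i : ℕ) < k} → ℂ) :
      finrank ℂ ↥(⨅ i, (f i).eigenspace (χ i)) ≤ 1 := by
    have hχ : ⨅ i, (f i).eigenspace (χ i) = ⨅ (i : Fin n) (_ : (i : ℕ) < k),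
        (H i).eigenspace (if h : (i : ℕ) < k then χ ⟨i, h⟩ else 0) := by
      simp +contextual [f, iInf_subtype]
    exact hχ ▸ hmf _
  rw [not_iff_not]
  refine ⟨fun h => h.mono (Set.subset_univ _), ?_⟩
  rintro ⟨W₁, W₂, h1, h2, hc, hi1, hi2⟩
  have hinvt (T : End ℂ (Fin r → ℂ)) (hT : ∀ i, Commute (f i) T) :
      W₁ ∈ T.invtSubmodule ∧ W₂ ∈ T.invtSubmodule := by
    refine (W₁.commute_projection_iff hc T).mp (commute_of_finrank_iInf_eigenspace_le_one hspan
      hmf' (fun i => ?_) hT)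
    exact ((W₁.commute_projection_iff hc _).mpr ⟨(hi1 i i.2).1, (hi2 i i.2).1⟩).symm
  have hH (i) := hinvt (H i) fun j => hHH j i
  have hY (i) : W₁ ∈ (Y i).invtSubmodule ∧ W₂ ∈ (Y i).invtSubmodule := by
    by_cases hik : (i : ℕ) < k
    · exact ⟨(hi1 i hik).2, (hi2 i hik).2⟩
    · exact hinvt (Y i) fun j => hHY j i fun h => hik (h ▸ j.2)
  exact ⟨W₁, W₂, h1, h2, hc, fun i _ => ⟨(hH i).1, (hY i).1⟩, fun i _ => ⟨(hH i).2, (hY i).2⟩⟩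

/-- If the restriction of a representation of `𝔟ⁿ` to the first `k`
factors is multiplicity-free, then the full representation is indecomposable iff the
restricted representation of `𝔟ᵏ` is indecomposable. -/
theorem statement7 {n r k : ℕ} (hk1 : 1 ≤ k) (hkn : k ≤ n)
    (H Y : Fin n → Module.End ℂ (Fin r → ℂ))
    (hHH : ∀ i j, Commute (H i) (H j)) (hYY : ∀ i j, Commute (Y i) (Y j))
    (hHY : ∀ i j, i ≠ j → Commute (H i) (Y j))
    (hrel : ∀ i, H i * Y i - Y i * H i = -(Y i))
    (hdiag : ∀ i, (⨆ μ : ℂ, Module.End.eigenspace (H i) μ) = ⊤)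
    (hmf : ∀ θ : Fin n → ℂ, Module.finrank ℂ
      ↥(⨅ (i : Fin n) (_ : (i : ℕ) < k), Module.End.eigenspace (H i) (θ i)) ≤ 1) :
    (¬ DecomposableOn H Y Set.univ) ↔
      (¬ DecomposableOn H Y {i : Fin n | (i : ℕ) < k}) :=
  statement7_general H Y hHH hHY hdiag hmf
end
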